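/- arXiv:1607.06254 — 6 statements merged into one kernel-verified Lean document; each statement's English description precedes it below -/
import Mathlib

section
/- Let b>0 and α∈(1,2). For every ε₀ ∈ (0, π/2) and every t ≥ 0, there exist constants C₃, C₄ > 0 (depending only on b, α, ε₀ and t) such that |∫₀^t v_s(z) ds| ≤ C₃ + C₄ |z|^{2−α} for all z ∈ ℂ with Arg(z) ∈ [π/2 + ε₀, π] and |z| ≥ 2. -/
/-!
Write `q = 1/(αb)`, `w = z^(1-α)` and `e_s = exp(b(α-1)s)`, so that `v_s(z) = W_s^(1/(1-α))`
with `W_s = (q + w) e_s - q = q(e_s - 1) + e_s w`. On the sector, `arg w = (1-α) arg z` stays a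
fixed angle away from the real axis, so `|Im W_s| ≥ m e_s |w|`, while
`Re W_s ≥ q(e_s - 1) - e_s |w|`; together `|W_s| ≳ s + |z|^(1-α)`. As `1/(1-α) < -1`,
integrating `(s + δ)^(1/(1-α))` over `s ≥ 0` gives a multiple of `δ^((2-α)/(1-α))`, which is
`|z|^(2-α)` for `δ = |z|^(1-α)`.
-/

open Real

/-- The complex extension of the function `v_s(z)`, defined via principal-branch
complex powers (with the convention `0 ^ β = 0`). -/
noncomputable def vC (b α : ℝ) (s : ℝ) (z : ℂ) : ℂ :=
  ((1 / ((α : ℂ) * (b : ℂ)) + z ^ ((1 : ℂ) - (α : ℂ))) * Complex.exp ((b * (α - 1) * s : ℝ) : ℂ)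
      - 1 / ((α : ℂ) * (b : ℂ))) ^ ((1 : ℂ) / (1 - (α : ℂ)))

lemma Real.min_sin_le_sin_of_mem_Icc {a b x : ℝ} (ha : 0 ≤ a) (hb : b ≤ π)
    (hx : x ∈ Set.Icc a b) : min (sin a) (sin b) ≤ sin x :=
  strictConcaveOn_sin_Icc.concaveOn.min_le_of_mem_Icc ⟨ha, by linarith [hx.1, hx.2]⟩
    ⟨by linarith [hx.1, hx.2], hb⟩ hx

lemma Complex.abs_im_cpow_ofReal (z : ℂ) (x : ℝ) :
    |(z ^ (x : ℂ)).im| = ‖z‖ ^ x * |Real.sin (arg z * x)| := by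
  rw [cpow_ofReal_im, abs_mul, abs_of_nonneg (by positivity)]

lemma div_add_two_mul_le_norm_mul_sub {q e m : ℝ} {w : ℂ} (he : 1 ≤ e)
    (hm : 0 ≤ m) (hw : m * ‖w‖ ≤ |w.im|) :
    m / (m + 2) * (q * (e - 1) + ‖w‖) ≤ ‖((q : ℂ) + w) * e - q‖ := by
  set W : ℂ := ((q : ℂ) + w) * e - q
  have him : |W.im| = e * |w.im| := by
    simp [W, abs_mul, abs_of_nonneg (by linarith : (0:ℝ) ≤ e), mul_comm]
  have hre : q * (e - 1) - e * ‖w‖ ≤ W.re := by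
    have : -‖w‖ ≤ w.re := (abs_le.mp (Complex.abs_re_le_norm w)).1
    simp only [W, Complex.sub_re, Complex.mul_re, Complex.add_re, Complex.ofReal_re,
      Complex.add_im, Complex.ofReal_im]
    nlinarith
  have h_im : m * ‖w‖ * e ≤ ‖W‖ := by
    calc m * ‖w‖ * e ≤ |w.im| * e := by gcongr
      _ = |W.im| := by rw [him, mul_comm]
      _ ≤ ‖W‖ := Complex.abs_im_le_norm W
  have h_re : q * (e - 1) - e * ‖w‖ ≤ ‖W‖ := hre.trans (Complex.re_le_norm W)
  have h_e : m * ‖w‖ ≤ m * ‖w‖ * e := le_mul_of_one_le_right (by positivity) he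
  -- `2 * h_im + m * h_re`
  rw [div_mul_eq_mul_div, div_le_iff₀ (by linarith)]
  nlinarith [mul_le_mul_of_nonneg_left h_re hm]

lemma integral_add_rpow_le {δ β t : ℝ} (hδ : 0 < δ) (hβ : β < -1) (ht : 0 ≤ t) :
    ∫ s in (0 : ℝ)..t, (s + δ) ^ β ≤ δ ^ (β + 1) / -(β + 1) := by
  rw [intervalIntegral.integral_comp_add_right (fun u ↦ u ^ β), zero_add,
    integral_rpow (Or.inr ⟨hβ.ne, Set.notMem_uIcc_of_lt hδ (by linarith)⟩), div_neg, ← neg_div]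
  have hpow : 0 ≤ (t + δ) ^ (β + 1) := rpow_nonneg (by linarith) _
  exact div_le_div_of_nonpos_of_le (by linarith) (by linarith)

lemma norm_integral_le_of_norm_le_mul_add_rpow {E : Type*} [NormedAddCommGroup E]
    [NormedSpace ℝ E] {f : ℝ → E} {c δ β t : ℝ} (hc : 0 < c) (hδ : 0 < δ) (hβ : β < -1)
    (ht : 0 ≤ t) (hf : ∀ s, 0 ≤ s → ‖f s‖ ≤ (c * (s + δ)) ^ β) :
    ‖∫ s in (0 : ℝ)..t, f s‖ ≤ c ^ β * (δ ^ (β + 1) / -(β + 1)) := by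
  have hpos : ∀ s ∈ Set.uIcc 0 t, 0 < s + δ := fun s hs ↦ by
    rw [Set.uIcc_of_le ht] at hs; linarith [hs.1]
  have hint : IntervalIntegrable (fun s ↦ c ^ β * (s + δ) ^ β) MeasureTheory.volume 0 t :=
    (continuousOn_const.mul <| (continuous_id.add continuous_const).continuousOn.rpow_const
      fun s hs ↦ Or.inl (hpos s hs).ne').intervalIntegrable
  calc ‖∫ s in (0 : ℝ)..t, f s‖ ≤ ∫ s in (0 : ℝ)..t, c ^ β * (s + δ) ^ β :=
        intervalIntegral.norm_integral_le_of_norm_le ht (Filter.Eventually.of_forall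
          fun s hs ↦ (hf s hs.1.le).trans_eq (mul_rpow hc.le (by linarith [hs.1]))) hint
    _ ≤ c ^ β * (δ ^ (β + 1) / -(β + 1)) := by
        rw [intervalIntegral.integral_const_mul]
        gcongr
        exact integral_add_rpow_le hδ hβ ht

lemma min_sin_mul_le_abs_im_cpow {α a : ℝ} (hα : 1 ≤ α) (hα2 : α ≤ 2) (ha : 0 ≤ a) {z : ℂ}
    (harg : a ≤ Complex.arg z) :
    min (sin ((α - 1) * a)) (sin ((α - 1) * π)) * ‖z‖ ^ (1 - α) ≤
      |(z ^ ((1 - α : ℝ) : ℂ)).im| := by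
  have hsin : sin ((α - 1) * Complex.arg z) ≤ |sin (Complex.arg z * (1 - α))| := by
    rw [show Complex.arg z * (1 - α) = -((α - 1) * Complex.arg z) by ring, sin_neg, abs_neg]
    exact le_abs_self _
  have hmin : min (sin ((α - 1) * a)) (sin ((α - 1) * π)) ≤ sin ((α - 1) * Complex.arg z) :=
    Real.min_sin_le_sin_of_mem_Icc (by positivity) (by nlinarith [pi_pos])
      ⟨by gcongr, by gcongr; exact Complex.arg_le_pi z⟩
  rw [Complex.abs_im_cpow_ofReal, mul_comm]
  gcongr
  exact hmin.trans hsin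

lemma norm_vC_le {b α m s : ℝ} (hb : 0 < b) (hα : 1 < α) (hm : 0 < m) {z : ℂ} (hz : z ≠ 0)
    (hzm : m * ‖z‖ ^ (1 - α) ≤ |(z ^ ((1 - α : ℝ) : ℂ)).im|) (hs : 0 ≤ s) :
    ‖vC b α s z‖ ≤ (m / (m + 2) * ((α - 1) / α) * (s + ‖z‖ ^ (1 - α))) ^ (1 / (1 - α)) := by
  set q := 1 / (α * b)
  set e := exp (b * (α - 1) * s)
  set w : ℂ := z ^ ((1 - α : ℝ) : ℂ)
  have hv : vC b α s z = (((q : ℂ) + w) * e - q) ^ ((1 / (1 - α) : ℝ) : ℂ) := by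
    simp only [vC, q, e, w]; push_cast; rfl
  have hw : ‖w‖ = ‖z‖ ^ (1 - α) := Complex.norm_cpow_real z _
  have he : 1 ≤ e := one_le_exp (by positivity)
  have hqe : (α - 1) / α * s ≤ q * (e - 1) := by
    have := add_one_le_exp (b * (α - 1) * s)
    calc (α - 1) / α * s = q * (b * (α - 1) * s) := by simp only [q]; field_simp
      _ ≤ q * (e - 1) := by gcongr; linarith
  have hk : (α - 1) / α ≤ 1 := (div_le_one (by linarith)).mpr (by linarith)
  have hW := div_add_two_mul_le_norm_mul_sub (q := q) he hm.le (hw ▸ hzm)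
  rw [hv, Complex.norm_cpow_real]
  refine rpow_le_rpow_of_nonpos (by positivity) (le_trans ?_ hW) ?_
  · rw [mul_assoc, hw]
    gcongr
    nlinarith [rpow_pos_of_pos (norm_pos_iff.mpr hz) (1 - α)]
  · rw [one_div_nonpos]; linarith

theorem stmt_5 (b α : ℝ) (hb : 0 < b) (hα : 1 < α) (hα2 : α < 2) :
    ∀ ε₀ : ℝ, 0 < ε₀ → ε₀ < π / 2 → ∀ t : ℝ, 0 ≤ t →
      ∃ C₃ C₄ : ℝ, 0 < C₃ ∧ 0 < C₄ ∧
        ∀ z : ℂ, π / 2 + ε₀ ≤ Complex.arg z → Complex.arg z ≤ π → 2 ≤ ‖z‖ →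
          ‖∫ s in (0:ℝ)..t, vC b α s z‖ ≤ C₃ + C₄ * ‖z‖ ^ (2 - α) := by
  intro ε₀ hε₀ _ t ht
  have hα1 : 0 < α - 1 := by linarith
  have hα2' : 0 < 2 - α := by linarith
  set m := min (sin ((α - 1) * (π / 2 + ε₀))) (sin ((α - 1) * π))
  have hm : 0 < m := lt_min (sin_pos_of_pos_of_lt_pi (by positivity) (by nlinarith [pi_pos]))
    (sin_pos_of_pos_of_lt_pi (by nlinarith [pi_pos]) (by nlinarith [pi_pos]))
  set c := m / (m + 2) * ((α - 1) / α)
  have hc : 0 < c := by positivity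
  refine ⟨1, c ^ (1 / (1 - α)) * ((α - 1) / (2 - α)), one_pos, by positivity,
    fun z harg _ hz ↦ ?_⟩
  have hz0 : z ≠ 0 := norm_pos_iff.mp (by linarith)
  have hβ : 1 / (1 - α) < -1 := by
    rw [div_lt_iff_of_neg (by linarith)]; linarith
  have key := norm_integral_le_of_norm_le_mul_add_rpow hc
    (rpow_pos_of_pos (norm_pos_iff.mpr hz0) (1 - α)) hβ ht fun s hs ↦
      norm_vC_le hb hα hm hz0 (min_sin_mul_le_abs_im_cpow hα.le hα2.le (by positivity) harg) hs
  have hexp : (‖z‖ ^ (1 - α)) ^ (1 / (1 - α) + 1) = ‖z‖ ^ (2 - α) := by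
    rw [← rpow_mul (norm_nonneg z)]
    congr 1
    field_simp [show 1 - α ≠ 0 by linarith]
    ring
  have hden : -(1 / (1 - α) + 1) = (2 - α) / (α - 1) := by
    field_simp [show 1 - α ≠ 0 by linarith, hα1.ne']
    ring
  rw [hexp, hden, div_div_eq_mul_div, mul_div_assoc, mul_comm (‖z‖ ^ _), ← mul_assoc] at key
  linarith
end

section
/- Let a>0, b>0, α∈(1,2) and T>1. Then there exist constants c₁, c₂ > 0 (depending on a, b, α and T) such that for all ξ ∈ ℝ and all t with 1/T ≤ t ≤ T, one has | exp( −a ∫₀^t v_s(−iξ) ds ) | ≤ c₁ e^{−c₂ |ξ|^{2−α}}. -/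
/-!
Write `v_s = w_s ^ (1 / (1 - α))` with `w_s = ρ e^{βs} e^{±iφ} + (e^{βs} - 1) / (αb)`, where
`ρ = |ξ| ^ (1 - α)`, `β = b (α - 1)` and `φ = π (α - 1) / 2`. As a vector of argument `±φ` plus a
nonnegative real, `w_s` has `|arg w_s| ≤ φ`, so `|arg w_s| / (α - 1) ≤ π / 2` and `Re v_s ≥ 0` for
every `ξ` and `s ≥ 0`. On the window `s ∈ [ρ, 2ρ]`, which lies in `[0, 1/T]` once `|ξ|` is large,
the real drift is comparable to `ρ`: it pushes `|arg w_s|` below a fixed angle `θ < φ`, while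
`‖w_s‖ ≤ 8ρ`. Hence `Re v_s ≥ K |ξ|` there, and `Re ∫₀ᵗ v_s ≥ ρ · K |ξ| = K |ξ| ^ (2 - α)`.
Small `|ξ|` are absorbed into `c₁`.
-/

open Real

namespace Complex

lemma abs_arg_le_arctan {w : ℂ} {x : ℝ} (hx : 0 ≤ x) (hre : 0 ≤ w.re)
    (him : |w.im| ≤ x * w.re) : |arg w| ≤ Real.arctan x := by
  rcases hre.eq_or_lt with hre | hre
  · have hw : w = 0 := Complex.ext hre.symm (abs_nonpos_iff.1 (by simpa [← hre] using him))
    simpa [hw] using arctan_nonneg.2 hx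
  have hlt := abs_lt.1 (abs_arg_lt_pi_div_two_iff.2 (Or.inl hre))
  have harg : arg w = Real.arctan (w.im / w.re) := by
    rw [← tan_arg, Real.arctan_tan hlt.1 hlt.2]
  have hratio : |w.im / w.re| ≤ x := by
    rwa [abs_div, abs_of_pos hre, div_le_iff₀ hre]
  rw [harg, abs_le, ← Real.arctan_neg]
  exact ⟨arctan_le_arctan_iff.2 (neg_le_of_abs_le hratio),
    arctan_le_arctan_iff.2 (le_of_abs_le hratio)⟩

lemma re_cpow_ofReal_nonneg {w : ℂ} {r : ℝ} (h : |arg w * r| ≤ π / 2) :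
    0 ≤ (w ^ (r : ℂ)).re := by
  rw [cpow_ofReal_re]
  exact mul_nonneg (rpow_nonneg (norm_nonneg w) r) (Real.cos_nonneg_of_mem_Icc (abs_le.1 h))

lemma rpow_mul_cos_le_re_cpow {w : ℂ} {r M ψ : ℝ} (hw : w ≠ 0) (hr : r ≤ 0)
    (hM : ‖w‖ ≤ M) (hψ : |arg w * r| ≤ ψ) (hψπ : ψ ≤ π / 2) :
    M ^ r * Real.cos ψ ≤ (w ^ (r : ℂ)).re := by
  have hψ0 : 0 ≤ ψ := (abs_nonneg _).trans hψ
  rw [cpow_ofReal_re, ← Real.cos_abs (arg w * r)]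
  exact mul_le_mul (rpow_le_rpow_of_nonpos (norm_pos_iff.2 hw) hM hr)
    (Real.cos_le_cos_of_nonneg_of_le_pi (abs_nonneg _) (by linarith [pi_pos]) hψ)
    (Real.cos_nonneg_of_mem_Icc ⟨by linarith [pi_pos], hψπ⟩) (rpow_nonneg (norm_nonneg w) r)

lemma arg_neg_I_mul_ofReal {ξ : ℝ} (hξ : ξ ≠ 0) :
    arg (-I * ξ) = π / 2 ∨ arg (-I * ξ) = -(π / 2) := by
  rcases hξ.lt_or_gt with h | h
  · exact Or.inl (arg_eq_pi_div_two_iff.2 (by simp [h]))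
  · exact Or.inr (arg_eq_neg_pi_div_two_iff.2 (by simp [h]))

lemma neg_I_mul_ofReal_cpow_re {p : ℝ} (hp : p ≠ 0) (ξ : ℝ) :
    ((-I * ξ) ^ (p : ℂ)).re = |ξ| ^ p * Real.cos (π / 2 * p) := by
  rcases eq_or_ne ξ 0 with rfl | hξ
  · simp [zero_rpow hp, zero_cpow (ofReal_ne_zero.2 hp)]
  rw [cpow_ofReal_re]
  rcases arg_neg_I_mul_ofReal hξ with h | h <;> rw [h] <;> simp

lemma abs_neg_I_mul_ofReal_cpow_im {p : ℝ} (hp : p ≠ 0) (ξ : ℝ) :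
    |((-I * ξ) ^ (p : ℂ)).im| = |ξ| ^ p * |Real.sin (π / 2 * p)| := by
  rcases eq_or_ne ξ 0 with rfl | hξ
  · simp [zero_rpow hp, zero_cpow (ofReal_ne_zero.2 hp)]
  rw [cpow_ofReal_im, abs_mul, abs_of_nonneg (rpow_nonneg (norm_nonneg _) p)]
  rcases arg_neg_I_mul_ofReal hξ with h | h <;> rw [h] <;> simp

end Complex

lemma intervalIntegral.re_integral_nonneg {f : ℝ → ℂ} {a b : ℝ} (hab : a ≤ b)
    (hf : ∀ s ∈ Set.Icc a b, 0 ≤ (f s).re) : 0 ≤ (∫ s in a..b, f s).re := by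
  by_cases hi : IntervalIntegrable f MeasureTheory.volume a b
  · rw [← Complex.reCLM_apply, ← Complex.reCLM.intervalIntegral_comp_comm hi]
    exact intervalIntegral.integral_nonneg hab hf
  · simp [intervalIntegral.integral_undef hi]

lemma intervalIntegral.mul_le_integral_of_le_on {f : ℝ → ℝ} {a b c d m : ℝ}
    (hf : IntervalIntegrable f MeasureTheory.volume a b) (hac : a ≤ c) (hcd : c ≤ d) (hdb : d ≤ b)
    (hnn : ∀ s ∈ Set.Icc a b, 0 ≤ f s) (hm : ∀ s ∈ Set.Icc c d, m ≤ f s) :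
    (d - c) * m ≤ ∫ s in a..b, f s := by
  calc (d - c) * m = ∫ _ in c..d, m := by simp
    _ ≤ ∫ s in c..d, f s :=
      intervalIntegral.integral_mono_on hcd intervalIntegrable_const
        (hf.mono_set (Set.uIcc_subset_uIcc (Set.mem_uIcc_of_le hac (hcd.trans hdb))
          (Set.mem_uIcc_of_le (hac.trans hcd) hdb))) hm
    _ ≤ ∫ s in a..b, f s :=
      intervalIntegral.integral_mono_interval hac hcd hdb
        ((MeasureTheory.ae_restrict_iff' measurableSet_Ioc).2
          (Filter.Eventually.of_forall fun s hs => hnn s (Set.Ioc_subset_Icc_self hs))) hf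

open Complex (I arg)

noncomputable def wC (b α : ℝ) (s : ℝ) (z : ℂ) : ℂ :=
  (1 / ((α : ℂ) * (b : ℂ)) + z ^ ((1 : ℂ) - (α : ℂ))) * Complex.exp ((b * (α - 1) * s : ℝ) : ℂ)
    - 1 / ((α : ℂ) * (b : ℂ))

/-- Once the real drift `(exp (b (α - 1) s) - 1) / (α b)` exceeds `(α - 1) / (2α)` times the
rotated term `|ξ| ^ (1 - α) exp (b (α - 1) s)`, `|arg wC|` stays below this angle `θ < φ`. -/
noncomputable def vArgBound (α : ℝ) : ℝ :=
  arctan (sin (π * (α - 1) / 2) / (cos (π * (α - 1) / 2) + (α - 1) / (2 * α)))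

noncomputable def vLowerConst (α : ℝ) : ℝ :=
  8 ^ (1 / (1 - α)) * cos (vArgBound α / (α - 1))

section

variable {b α : ℝ}

lemma vC_eq_wC_cpow (s : ℝ) (z : ℂ) :
    vC b α s z = wC b α s z ^ ((1 / (1 - α) : ℝ) : ℂ) := by
  push_cast
  rfl

lemma wC_neg_I_mul_re (hα : α ≠ 1) (ξ s : ℝ) :
    (wC b α s (-I * ξ)).re = |ξ| ^ (1 - α) * exp (b * (α - 1) * s) * cos (π * (α - 1) / 2)
      + (exp (b * (α - 1) * s) - 1) / (α * b) := by
  have hp : 1 - α ≠ 0 := sub_ne_zero.2 hα.symm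
  have h := Complex.neg_I_mul_ofReal_cpow_re hp ξ
  rw [show π / 2 * (1 - α) = -(π * (α - 1) / 2) by ring, cos_neg] at h
  rw [wC, show (1 : ℂ) - α = ((1 - α : ℝ) : ℂ) by push_cast; ring, ← Complex.ofReal_exp,
    show 1 / ((α : ℂ) * b) = ((1 / (α * b) : ℝ) : ℂ) by push_cast; ring]
  simp only [Complex.sub_re, Complex.mul_re, Complex.add_re, Complex.add_im, Complex.ofReal_re,
    Complex.ofReal_im, h]
  ring

lemma abs_wC_neg_I_mul_im (hα : α ≠ 1) (ξ s : ℝ) :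
    |(wC b α s (-I * ξ)).im| = |ξ| ^ (1 - α) * exp (b * (α - 1) * s) * |sin (π * (α - 1) / 2)| := by
  have hp : 1 - α ≠ 0 := sub_ne_zero.2 hα.symm
  have h := Complex.abs_neg_I_mul_ofReal_cpow_im hp ξ
  rw [show π / 2 * (1 - α) = -(π * (α - 1) / 2) by ring, sin_neg, abs_neg] at h
  rw [wC, show (1 : ℂ) - α = ((1 - α : ℝ) : ℂ) by push_cast; ring, ← Complex.ofReal_exp,
    show 1 / ((α : ℂ) * b) = ((1 / (α * b) : ℝ) : ℂ) by push_cast; ring]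
  simp only [Complex.sub_im, Complex.mul_im, Complex.add_re, Complex.add_im, Complex.ofReal_re,
    Complex.ofReal_im, mul_zero, zero_add, sub_zero, abs_mul, h,
    abs_of_pos (exp_pos _)]
  ring

lemma sin_pos_and_cos_pos_of_lt_two (hα : 1 < α) (hα2 : α < 2) :
    0 < sin (π * (α - 1) / 2) ∧ 0 < cos (π * (α - 1) / 2) := by
  have hπ := pi_pos
  exact ⟨sin_pos_of_pos_of_lt_pi (by nlinarith) (by nlinarith),
    cos_pos_of_mem_Ioo ⟨by nlinarith, by nlinarith⟩⟩

lemma abs_mul_one_div_one_sub (hα : 1 < α) (y : ℝ) : |y * (1 / (1 - α))| = |y| / (α - 1) := by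
  rw [abs_mul, abs_div, abs_one, abs_of_neg (by linarith : 1 - α < 0), neg_sub]
  ring

lemma abs_arg_wC_le (hα : 1 < α) (hα2 : α < 2) (ξ s : ℝ) {η : ℝ} (hη : 0 ≤ η)
    (hR : η * (|ξ| ^ (1 - α) * exp (b * (α - 1) * s)) ≤ (exp (b * (α - 1) * s) - 1) / (α * b)) :
    |arg (wC b α s (-I * ξ))| ≤
      arctan (sin (π * (α - 1) / 2) / (cos (π * (α - 1) / 2) + η)) := by
  obtain ⟨hsin, hcos⟩ := sin_pos_and_cos_pos_of_lt_two hα hα2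
  have hρE : 0 ≤ |ξ| ^ (1 - α) * exp (b * (α - 1) * s) := by positivity
  apply Complex.abs_arg_le_arctan (by positivity)
  · rw [wC_neg_I_mul_re hα.ne']
    nlinarith
  · rw [abs_wC_neg_I_mul_im hα.ne', wC_neg_I_mul_re hα.ne', abs_of_pos hsin, div_mul_eq_mul_div,
      le_div_iff₀ (by positivity)]
    nlinarith [mul_le_mul_of_nonneg_left hR hsin.le]

lemma exp_sub_one_div_nonneg (hb : 0 < b) (hα : 1 < α) {s : ℝ} (hs : 0 ≤ s) :
    0 ≤ (exp (b * (α - 1) * s) - 1) / (α * b) :=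
  div_nonneg (sub_nonneg.2 (one_le_exp (mul_nonneg (mul_nonneg hb.le (by linarith)) hs)))
    (mul_pos (by linarith) hb).le

lemma wC_neg_I_mul_re_pos (hb : 0 < b) (hα : 1 < α) (hα2 : α < 2) {ξ s : ℝ} (hξ : ξ ≠ 0)
    (hs : 0 ≤ s) : 0 < (wC b α s (-I * ξ)).re := by
  rw [wC_neg_I_mul_re hα.ne']
  have hρ : 0 < |ξ| ^ (1 - α) := rpow_pos_of_pos (abs_pos.2 hξ) _
  exact add_pos_of_pos_of_nonneg (mul_pos (by positivity) (sin_pos_and_cos_pos_of_lt_two hα hα2).2)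
    (exp_sub_one_div_nonneg hb hα hs)

lemma continuousOn_vC (hb : 0 < b) (hα : 1 < α) (hα2 : α < 2) {ξ : ℝ} (hξ : ξ ≠ 0) :
    ContinuousOn (fun s => vC b α s (-I * ξ)) (Set.Ici 0) := by
  have hw : Continuous fun s => wC b α s (-I * ξ) := by
    unfold wC
    fun_prop
  simp_rw [vC_eq_wC_cpow]
  exact fun s hs => (ContinuousAt.comp (f := fun s => wC b α s (-I * ξ))
    (continuousAt_cpow_const (Complex.mem_slitPlane_iff.2 <| Or.inl
      (wC_neg_I_mul_re_pos hb hα hα2 hξ hs))) hw.continuousAt).continuousWithinAt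

lemma re_vC_nonneg (hb : 0 < b) (hα : 1 < α) (hα2 : α < 2) (ξ : ℝ) {s : ℝ} (hs : 0 ≤ s) :
    0 ≤ (vC b α s (-I * ξ)).re := by
  have harg := abs_arg_wC_le hα hα2 ξ s le_rfl
    ((zero_mul _).trans_le (exp_sub_one_div_nonneg hb hα hs))
  rw [add_zero, ← tan_eq_sin_div_cos,
    arctan_tan (by nlinarith [pi_pos]) (by nlinarith [pi_pos])] at harg
  rw [vC_eq_wC_cpow]
  apply Complex.re_cpow_ofReal_nonneg
  rw [abs_mul_one_div_one_sub hα, div_le_iff₀ (by linarith)]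
  linarith

lemma vArgBound_nonneg (hα : 1 < α) (hα2 : α < 2) : 0 ≤ vArgBound α := by
  obtain ⟨hsin, hcos⟩ := sin_pos_and_cos_pos_of_lt_two hα hα2
  exact arctan_nonneg.2
    (div_nonneg hsin.le (add_nonneg hcos.le (div_nonneg (by linarith) (by linarith))))

lemma vArgBound_lt (hα : 1 < α) (hα2 : α < 2) : vArgBound α < π * (α - 1) / 2 := by
  obtain ⟨hsin, hcos⟩ := sin_pos_and_cos_pos_of_lt_two hα hα2
  calc vArgBound α < arctan (tan (π * (α - 1) / 2)) := by
        rw [vArgBound, tan_eq_sin_div_cos, arctan_lt_arctan_iff]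
        exact div_lt_div_of_pos_left hsin hcos
          (lt_add_of_pos_right _ (div_pos (by linarith) (by linarith)))
    _ = π * (α - 1) / 2 := arctan_tan (by nlinarith [pi_pos]) (by nlinarith [pi_pos])

lemma vArgBound_div_lt (hα : 1 < α) (hα2 : α < 2) : vArgBound α / (α - 1) < π / 2 := by
  rw [div_lt_iff₀ (by linarith)]
  linarith [vArgBound_lt hα hα2]

lemma vLowerConst_pos (hα : 1 < α) (hα2 : α < 2) : 0 < vLowerConst α :=
  mul_pos (by positivity) (cos_pos_of_mem_Ioo ⟨by
    linarith [pi_pos, div_nonneg (vArgBound_nonneg hα hα2) (by linarith : 0 ≤ α - 1)],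
    vArgBound_div_lt hα hα2⟩)

lemma vLowerConst_mul_abs_le_re_vC (hb : 0 < b) (hα : 1 < α) (hα2 : α < 2) {ξ s : ℝ} (hξ : ξ ≠ 0)
    (hs₁ : |ξ| ^ (1 - α) ≤ s) (hs₂ : s ≤ 2 * |ξ| ^ (1 - α)) (hs₃ : b * (α - 1) * s ≤ 1 / 2) :
    vLowerConst α * |ξ| ≤ (vC b α s (-I * ξ)).re := by
  obtain ⟨hsin, hcos⟩ := sin_pos_and_cos_pos_of_lt_two hα hα2
  set ρ := |ξ| ^ (1 - α) with hρ_def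
  set x := b * (α - 1) * s
  set E := exp x
  set R := (E - 1) / (α * b)
  have hρ : 0 < ρ := rpow_pos_of_pos (abs_pos.2 hξ) _
  have hs : 0 ≤ s := hρ.le.trans hs₁
  have hx : 0 ≤ x := mul_nonneg (mul_nonneg hb.le (by linarith)) hs
  have hE : x ≤ E - 1 ∧ E - 1 ≤ 2 * x := by
    refine ⟨by linarith [add_one_le_exp x], ?_⟩
    have := abs_exp_sub_one_le (x := x) (by rw [abs_of_nonneg hx]; linarith)
    rwa [abs_of_nonneg (by linarith [add_one_le_exp x]), abs_of_nonneg hx] at this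
  have hxR : x / (α * b) = (α - 1) * s / α := by
    simp only [x]
    field_simp
  have hR : (α - 1) * s / α ≤ R ∧ R ≤ 2 * ((α - 1) * s / α) := by
    rw [← hxR, mul_div_assoc']
    exact ⟨div_le_div_of_nonneg_right hE.1 (by positivity),
      div_le_div_of_nonneg_right hE.2 (by positivity)⟩
  have hR0 : 0 ≤ R := exp_sub_one_div_nonneg hb hα hs
  have hw : wC b α s (-I * ξ) ≠ 0 := fun h =>
    (wC_neg_I_mul_re_pos hb hα hα2 hξ hs).ne' (by rw [h, Complex.zero_re])
  have hρE : ρ * E ≤ 2 * ρ := by nlinarith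
  have hsα : (α - 1) * s / α ≤ s := by
    rw [div_le_iff₀ (by linarith)]
    nlinarith
  have hnorm : ‖wC b α s (-I * ξ)‖ ≤ 8 * ρ := by
    have hρEcos : ρ * E * cos (π * (α - 1) / 2) ≤ ρ * E :=
      mul_le_of_le_one_right (by positivity) (cos_le_one _)
    have hρEsin : ρ * E * sin (π * (α - 1) / 2) ≤ ρ * E :=
      mul_le_of_le_one_right (by positivity) (sin_le_one _)
    calc ‖wC b α s (-I * ξ)‖
        ≤ |(wC b α s (-I * ξ)).re| + |(wC b α s (-I * ξ)).im| :=
          Complex.norm_le_abs_re_add_abs_im _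
      _ = ρ * E * cos (π * (α - 1) / 2) + R + ρ * E * sin (π * (α - 1) / 2) := by
          rw [wC_neg_I_mul_re hα.ne', abs_wC_neg_I_mul_im hα.ne', abs_of_pos hsin,
            abs_of_nonneg (add_nonneg (mul_nonneg (by positivity) hcos.le) hR0)]
      _ ≤ 8 * ρ := by linarith [hR.2]
  have harg : |arg (wC b α s (-I * ξ))| ≤ vArgBound α := by
    have hη : 0 ≤ (α - 1) / (2 * α) := div_nonneg (by linarith) (by linarith)
    refine abs_arg_wC_le hα hα2 ξ s hη ?_
    calc (α - 1) / (2 * α) * (ρ * E) ≤ (α - 1) / (2 * α) * (2 * ρ) :=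
          mul_le_mul_of_nonneg_left hρE hη
      _ = (α - 1) * ρ / α := by field_simp
      _ ≤ R := le_trans (by gcongr) hR.1
  have hpow : (8 * ρ) ^ (1 / (1 - α)) = 8 ^ (1 / (1 - α)) * |ξ| := by
    rw [mul_rpow (by norm_num) hρ.le, hρ_def, ← rpow_mul (abs_nonneg ξ),
      mul_one_div_cancel (by linarith : 1 - α ≠ 0), rpow_one]
  rw [vC_eq_wC_cpow, vLowerConst, mul_right_comm, ← hpow]
  refine Complex.rpow_mul_cos_le_re_cpow hw (one_div_nonpos.2 (by linarith)) hnorm ?_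
    (vArgBound_div_lt hα hα2).le
  rw [abs_mul_one_div_one_sub hα]
  exact div_le_div_of_nonneg_right harg (by linarith)

lemma vLowerConst_mul_le_re_integral (hb : 0 < b) (hα : 1 < α) (hα2 : α < 2) {ξ t : ℝ}
    (hξ : ξ ≠ 0) (ht : 2 * |ξ| ^ (1 - α) ≤ t) (hβ : 4 * b * (α - 1) * |ξ| ^ (1 - α) ≤ 1) :
    vLowerConst α * |ξ| ^ (2 - α)
      ≤ (∫ s in (0 : ℝ)..t, vC b α s (-I * ξ)).re := by
  have hρ : 0 < |ξ| ^ (1 - α) := rpow_pos_of_pos (abs_pos.2 hξ) _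
  have hcont : ContinuousOn (fun s => vC b α s (-I * ξ)) (Set.uIcc 0 t) :=
    (continuousOn_vC hb hα hα2 hξ).mono (by
      rw [Set.uIcc_of_le (by linarith)]
      exact Set.Icc_subset_Ici_self)
  have hβ0 : 0 ≤ b * (α - 1) := mul_nonneg hb.le (by linarith)
  have hpow : |ξ| ^ (2 - α) = (2 * |ξ| ^ (1 - α) - |ξ| ^ (1 - α)) * |ξ| := by
    rw [show 2 - α = (1 - α) + 1 by ring, rpow_add (abs_pos.2 hξ), rpow_one]
    ring
  rw [hpow, mul_left_comm, ← Complex.reCLM_apply,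
    ← Complex.reCLM.intervalIntegral_comp_comm hcont.intervalIntegrable]
  refine intervalIntegral.mul_le_integral_of_le_on
    (Complex.continuous_re.comp_continuousOn hcont).intervalIntegrable hρ.le (by linarith) ht
    (fun s hs => re_vC_nonneg hb hα hα2 ξ hs.1) fun s hs =>
      vLowerConst_mul_abs_le_re_vC hb hα hα2 hξ hs.1 hs.2
        (by nlinarith [mul_le_mul_of_nonneg_left hs.2 hβ0])

lemma sub_le_re_integral_vC (hb : 0 < b) (hα : 1 < α) (hα2 : α < 2) {T t : ℝ} (hT : 0 < T)
    (ht : 1 / T ≤ t) (ξ : ℝ) :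
    vLowerConst α * |ξ| ^ (2 - α)
        - vLowerConst α * ((2 * T + 4 * b * (α - 1)) ^ (α - 1)⁻¹) ^ (2 - α)
      ≤ (∫ s in (0 : ℝ)..t, vC b α s (-I * ξ)).re := by
  set B := 2 * T + 4 * b * (α - 1)
  have hβ0 : 0 ≤ b * (α - 1) := mul_nonneg hb.le (by linarith)
  have hB : 0 ≤ B := by positivity
  have hK := vLowerConst_pos hα hα2
  have ht0 : 0 ≤ t := le_trans (by positivity) ht
  -- needs no integrability: at `ξ = 0` the integrand blows up at `s = 0`
  have hnonneg := intervalIntegral.re_integral_nonneg ht0 fun s hs => re_vC_nonneg hb hα hα2 ξ hs.1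
  rcases le_or_gt |ξ| (B ^ (α - 1)⁻¹) with hsmall | hlarge
  · have := rpow_le_rpow (abs_nonneg ξ) hsmall (by linarith : 0 ≤ 2 - α)
    nlinarith
  have hBξ : B ≤ |ξ| ^ (α - 1) :=
    (rpow_inv_le_iff_of_pos hB (abs_nonneg _) (by linarith)).1 hlarge.le
  have hξ : 0 < |ξ| := lt_of_le_of_lt (by positivity) hlarge
  have hρ : 0 ≤ |ξ| ^ (1 - α) := by positivity
  have hρB : |ξ| ^ (1 - α) * B ≤ 1 := by
    calc |ξ| ^ (1 - α) * B ≤ |ξ| ^ (1 - α) * |ξ| ^ (α - 1) := mul_le_mul_of_nonneg_left hBξ hρ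
      _ = 1 := by rw [← rpow_add hξ]; simp
  have h2ρ : 2 * |ξ| ^ (1 - α) ≤ t := le_trans (by rw [le_div_iff₀ hT]; nlinarith) ht
  have := vLowerConst_mul_le_re_integral hb hα hα2 (abs_pos.1 hξ) h2ρ (by nlinarith)
  nlinarith [rpow_nonneg (rpow_nonneg hB (α - 1)⁻¹) (2 - α)]

end

theorem stmt_6 (a b α T : ℝ) (ha : 0 < a) (hb : 0 < b) (hα : 1 < α) (hα2 : α < 2) (hT : 1 < T) :
    ∃ c₁ c₂ : ℝ, 0 < c₁ ∧ 0 < c₂ ∧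
      ∀ ξ : ℝ, ∀ t : ℝ, 1 / T ≤ t → t ≤ T →
        ‖Complex.exp (-(a : ℂ) * ∫ s in (0:ℝ)..t, vC b α s (-Complex.I * (ξ : ℂ)))‖ ≤
          c₁ * Real.exp (-c₂ * |ξ| ^ (2 - α)) := by
  set C := vLowerConst α * ((2 * T + 4 * b * (α - 1)) ^ (α - 1)⁻¹) ^ (2 - α)
  refine ⟨exp (a * C), a * vLowerConst α, exp_pos _, mul_pos ha (vLowerConst_pos hα hα2),
    fun ξ t ht _ => ?_⟩
  have key := sub_le_re_integral_vC hb hα hα2 (by linarith) ht ξ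
  rw [Complex.norm_exp, show -(a : ℂ) = ((-a : ℝ) : ℂ) by push_cast; ring, Complex.re_ofReal_mul,
    ← exp_add, exp_le_exp]
  nlinarith
end

section
/- Let a>0, b>0 and α∈(1,2). There exists ε₀ ∈ (0, π/2) such that for every x>0 and every t>0, lim_{K→∞} ∫_{π/2}^{π/2+ε₀} i K e^{iθ} · e^{x K e^{iθ}} · exp( −a ∫₀^t v_s(K e^{iθ}) ds ) dθ = 0, i.e., the contour integral of z ↦ e^{xz} exp(−a ∫₀^t v_s(z) ds) over the circular arc { K e^{iθ} : θ ∈ [π/2, π/2+ε₀] } tends to 0 as K → ∞. -/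
open Real Filter

/-!
On the arc `z = K e^{iθ}`, `θ ∈ [π/2, π/2 + ε₀]`, put `β = 1/(α-1)`, `r = K^{1-α} → 0` and
`ψ = (α-1)θ`, so that `u = z^{1-α} = r e^{-iψ}` and `v_s(z) = (c(s) + E(s) u)^{-β}` with
`E(s) = e^{b(α-1)s}` and `c(s) = (E(s) - 1)/(αb) ≥ 0`.

Adding the real number `c(s) ≥ 0` can only shrink the argument, and `|c(s) + E(s) u| ≳ r`, so
`Re v_s(z) ≥ -const · K · ε₀` for every `s` (here `β ψ = θ` and `cos θ ≥ -ε₀`).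
As soon as `s ≥ Λ r` the real part `c(s)` dominates `E(s) r`, the base lies close to the positive
axis and `Re v_s(z) ≥ |base|^{-β}/2 > 0`; on `[Λ r, 2Λ r]` this is `≥ const · K`.
For `ε₀` small the bad initial stretch is beaten, and `Re ∫₀ᵗ v_s(z) ds ≥ c₀ K r = c₀ K^{2-α}`
uniformly on the arc. Since `|e^{xz}| ≤ 1` there, the integrand is at most `K e^{-a c₀ K^{2-α}}`,
which tends to `0`.
-/

namespace Complex

lemma re_cpow_ofReal_neg {B : ℂ} (hB : B ≠ 0) {β : ℝ} (hβ : 0 ≤ β) :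
    (B ^ ((-β : ℝ) : ℂ)).re = ‖B‖ ^ (-β) * Real.cos (β * |B.arg|) := by
  rw [cpow_def_of_ne_zero hB, exp_re, Real.rpow_def_of_pos (norm_pos_iff.mpr hB)]
  simp only [mul_re, mul_im, log_re, log_im, ofReal_re, ofReal_im, mul_zero, sub_zero, zero_add]
  rw [← Real.cos_abs, abs_mul, abs_neg, abs_of_nonneg hβ, mul_comm |B.arg|]

lemma abs_arg_ofReal_add_le {c : ℝ} (hc : 0 ≤ c) (u : ℂ) : |(c + u).arg| ≤ |u.arg| := by
  rcases eq_or_ne u 0 with rfl | hu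
  · simp [arg_ofReal_of_nonneg hc]
  rcases eq_or_ne ((c : ℂ) + u) 0 with hcu | hcu
  · simp [hcu]
  have hcos : Real.cos |u.arg| ≤ Real.cos |(c + u).arg| := by
    rw [Real.cos_abs, Real.cos_abs, cos_arg hu, cos_arg hcu,
      div_le_div_iff₀ (norm_pos_iff.mpr hu) (norm_pos_iff.mpr hcu)]
    have h₁ : ‖(c : ℂ) + u‖ ≤ c + ‖u‖ := by
      simpa [abs_of_nonneg hc] using norm_add_le (c : ℂ) u
    have h₂ : ‖u‖ - c ≤ ‖(c : ℂ) + u‖ := by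
      simpa [abs_of_nonneg hc, add_comm] using norm_sub_norm_le u (-(c : ℂ))
    have h₃ : |u.re| ≤ ‖u‖ := abs_re_le_norm u
    simp only [add_re, ofReal_re]
    rcases le_or_gt 0 u.re with h | h
    · nlinarith [abs_of_nonneg h]
    · nlinarith [abs_of_neg h]
  by_contra! hlt
  exact (Real.strictAntiOn_cos ⟨abs_nonneg _, abs_arg_le_pi u⟩
    ⟨abs_nonneg _, abs_arg_le_pi _⟩ hlt).not_ge hcos

lemma abs_arg_le_pi_div_two_mul {B : ℂ} (hB : 0 ≤ B.re) : |B.arg| ≤ π / 2 * (|B.im| / ‖B‖) := by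
  have hsin : Real.sin |B.arg| = |B.im| / ‖B‖ := by
    rcases abs_cases B.arg with ⟨he, hpos⟩ | ⟨he, hneg⟩
    · rw [he, sin_arg, abs_of_nonneg (arg_nonneg_iff.mp hpos)]
    · rw [he, Real.sin_neg, sin_arg, abs_of_neg (arg_neg_iff.mp hneg), neg_div]
  have := Real.mul_le_sin (abs_nonneg B.arg) (abs_arg_le_pi_div_two_iff.mpr hB)
  rw [hsin] at this
  calc |B.arg| = π / 2 * (2 / π * |B.arg|) := by field_simp
    _ ≤ π / 2 * (|B.im| / ‖B‖) := by gcongr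

lemma cpow_ofReal_mul_exp_mul_I {K θ : ℝ} (hK : 0 < K) (hθ : θ ∈ Set.Ioc (-π) π) (γ : ℝ) :
    ((K : ℂ) * exp (θ * I)) ^ (γ : ℂ) = ((K ^ γ : ℝ) : ℂ) * exp ((γ * θ : ℝ) * I) := by
  have hpolar : (K : ℂ) * exp (θ * I) = exp (Real.log K + θ * I) := by
    rw [exp_add, ← ofReal_exp, Real.exp_log hK]
  rw [hpolar, cpow_def_of_ne_zero (exp_ne_zero _),
    log_exp (by simpa using hθ.1) (by simpa using hθ.2),
    Real.rpow_def_of_pos hK, ofReal_exp, ← exp_add]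
  push_cast
  ring_nf

lemma rpow_neg_mul_cos_le_re_cpow_neg {B : ℂ} {β φ ρ : ℝ} (hβ : 0 ≤ β) (hρ : 0 < ρ)
    (hρB : ρ ≤ ‖B‖) (hφ : |B.arg| ≤ φ) (hβφ : β * φ ≤ π) (hcos : Real.cos (β * φ) ≤ 0) :
    ρ ^ (-β) * Real.cos (β * φ) ≤ (B ^ ((-β : ℝ) : ℂ)).re := by
  have hB : B ≠ 0 := norm_pos_iff.mp (hρ.trans_le hρB)
  rw [re_cpow_ofReal_neg hB hβ]
  calc ρ ^ (-β) * Real.cos (β * φ) ≤ ‖B‖ ^ (-β) * Real.cos (β * φ) :=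
        mul_le_mul_of_nonpos_right (Real.rpow_le_rpow_of_nonpos hρ hρB (by linarith)) hcos
    _ ≤ ‖B‖ ^ (-β) * Real.cos (β * |B.arg|) := by
        gcongr
        exact Real.cos_le_cos_of_nonneg_of_le_pi (by positivity) hβφ (by gcongr)

lemma rpow_neg_div_two_le_re_cpow_neg {B : ℂ} {β ρ : ℝ} (hβ : 0 ≤ β) (hB : B ≠ 0)
    (hre : 0 ≤ B.re) (him : 3 * β * |B.im| ≤ ‖B‖) (hBρ : ‖B‖ ≤ ρ) :
    ρ ^ (-β) / 2 ≤ (B ^ ((-β : ℝ) : ℂ)).re := by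
  have hB' : 0 < ‖B‖ := norm_pos_iff.mpr hB
  have harg : β * |B.arg| ≤ π / 3 := by
    have := mul_le_mul_of_nonneg_left (abs_arg_le_pi_div_two_mul hre) hβ
    have hq : β * (|B.im| / ‖B‖) ≤ 1 / 3 := by
      rw [← mul_div_assoc, div_le_div_iff₀ hB' (by norm_num)]; linarith
    nlinarith [Real.pi_pos]
  have hcos : 1 / 2 ≤ Real.cos (β * |B.arg|) := by
    rw [← Real.cos_pi_div_three]
    exact Real.cos_le_cos_of_nonneg_of_le_pi (by positivity) (by linarith [Real.pi_pos]) harg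
  rw [re_cpow_ofReal_neg hB hβ]
  have hρB : ρ ^ (-β) ≤ ‖B‖ ^ (-β) := Real.rpow_le_rpow_of_nonpos hB' hBρ (by linarith)
  nlinarith [Real.rpow_nonneg hB'.le (-β)]

end Complex

lemma le_intervalIntegral_of_lower_bounds {f : ℝ → ℝ} (hf : Continuous f) {L t A B : ℝ}
    (hL : 0 ≤ L) (hLt : 2 * L ≤ t) (h₁ : ∀ s ∈ Set.Icc 0 L, A ≤ f s)
    (h₂ : ∀ s ∈ Set.Icc L (2 * L), B ≤ f s) (h₃ : ∀ s ∈ Set.Icc (2 * L) t, 0 ≤ f s) :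
    L * (A + B) ≤ ∫ s in (0 : ℝ)..t, f s := by
  have hi : ∀ p q : ℝ, IntervalIntegrable f MeasureTheory.volume p q :=
    fun p q => hf.intervalIntegrable p q
  have i₁ : L * A ≤ ∫ s in (0 : ℝ)..L, f s := by
    simpa using intervalIntegral.integral_mono_on hL intervalIntegrable_const (hi 0 L) h₁
  have i₂ : L * B ≤ ∫ s in L..2 * L, f s := by
    have := intervalIntegral.integral_mono_on (by linarith) intervalIntegrable_const (hi _ _) h₂
    simp only [intervalIntegral.integral_const, smul_eq_mul] at this
    linarith
  have i₃ : 0 ≤ ∫ s in 2 * L..t, f s := intervalIntegral.integral_nonneg hLt h₃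
  rw [← intervalIntegral.integral_add_adjacent_intervals (hi 0 L) (hi L t),
    ← intervalIntegral.integral_add_adjacent_intervals (hi L (2 * L)) (hi _ t)]
  linarith

lemma tendsto_mul_exp_neg_mul_rpow {c p : ℝ} (hc : 0 < c) (hp : 0 < p) :
    Tendsto (fun K : ℝ => K * Real.exp (-(c * K ^ p))) atTop (nhds 0) := by
  have := (tendsto_rpow_mul_exp_neg_mul_atTop_nhds_zero p⁻¹ c hc).comp (tendsto_rpow_atTop hp)
  refine this.congr' ?_
  filter_upwards [eventually_ge_atTop 0] with K hK
  simp [← Real.rpow_mul hK, mul_inv_cancel₀ hp.ne']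

lemma rpow_one_sub_rpow_neg_inv {K α : ℝ} (hK : 0 < K) (hα : α ≠ 1) :
    (K ^ (1 - α)) ^ (-(α - 1)⁻¹) = K := by
  rw [← Real.rpow_mul hK.le, show (1 - α) * -(α - 1)⁻¹ = 1 by
    field_simp [sub_ne_zero.mpr hα]; ring, Real.rpow_one]

lemma norm_arc_integrand_le {a x K θ M : ℝ} {W : ℂ} (ha : 0 ≤ a) (hx : 0 ≤ x) (hK : 0 ≤ K)
    (hθ : Real.cos θ ≤ 0) (hW : M ≤ W.re) :
    ‖Complex.I * (K : ℂ) * Complex.exp ((θ : ℂ) * Complex.I) *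
        Complex.exp ((x : ℂ) * ((K : ℂ) * Complex.exp ((θ : ℂ) * Complex.I))) *
        Complex.exp (-(a : ℂ) * W)‖ ≤ K * Real.exp (-(a * M)) := by
  simp only [norm_mul, Complex.norm_I, Complex.norm_real, Complex.norm_exp, Complex.mul_re,
    Complex.exp_ofReal_mul_I_re, Complex.ofReal_re, Complex.ofReal_im, Complex.I_re, Complex.I_im,
    Complex.neg_re, Complex.neg_im, Real.norm_eq_abs, abs_of_nonneg hK, mul_zero, zero_mul,
    sub_zero, neg_zero, Real.exp_zero, one_mul, mul_one]
  rw [mul_assoc, ← Real.exp_add]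
  gcongr
  nlinarith [mul_nonpos_of_nonneg_of_nonpos hK hθ, mul_nonneg hx hK]

noncomputable def vGrowth (b α s : ℝ) : ℝ := Real.exp (b * (α - 1) * s)

noncomputable def vShift (b α s : ℝ) : ℝ := (vGrowth b α s - 1) / (α * b)

lemma vC_eq_cpow (b α s : ℝ) (z : ℂ) :
    vC b α s z = ((vShift b α s : ℂ) + vGrowth b α s * z ^ ((1 : ℂ) - α)) ^
      ((-(α - 1)⁻¹ : ℝ) : ℂ) := by
  unfold vC vShift vGrowth
  push_cast
  rw [show (1 : ℂ) - α = -(α - 1) by ring, one_div (-((α : ℂ) - 1)), inv_neg]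
  ring_nf

lemma vGrowth_pos (b α s : ℝ) : 0 < vGrowth b α s := Real.exp_pos _

lemma one_le_vGrowth {b α s : ℝ} (hb : 0 ≤ b) (hα : 1 ≤ α) (hs : 0 ≤ s) : 1 ≤ vGrowth b α s :=
  Real.one_le_exp (by have := sub_nonneg.mpr hα; positivity)

lemma vGrowth_le_vGrowth_one {b α s : ℝ} (hb : 0 ≤ b) (hα : 1 ≤ α) (hs : s ≤ 1) :
    vGrowth b α s ≤ vGrowth b α 1 :=
  Real.exp_le_exp.mpr (by have := sub_nonneg.mpr hα; nlinarith [mul_nonneg hb this])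

lemma vShift_nonneg {b α s : ℝ} (hb : 0 < b) (hα : 1 ≤ α) (hs : 0 ≤ s) : 0 ≤ vShift b α s :=
  div_nonneg (sub_nonneg.mpr (one_le_vGrowth hb.le hα hs)) (by positivity)

lemma mul_vGrowth_le_vShift {b α s : ℝ} (hb : 0 < b) (hα : 1 < α) (hs : 0 ≤ s) :
    (α - 1) * min s 1 / (α * vGrowth b α 1) * vGrowth b α s ≤ vShift b α s := by
  -- `vShift / vGrowth = (1 - e^{-b(α-1)s}) / (αb)` increases with `s`,
  -- and `1 - e^{-y} ≥ y e^{-y}`.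
  set y := b * (α - 1) * min s 1
  have hy : 0 ≤ y := by have := sub_pos.mpr hα; positivity
  have hbα : 0 ≤ b * (α - 1) := by have := sub_pos.mpr hα; positivity
  have hys : Real.exp y ≤ vGrowth b α s :=
    Real.exp_le_exp.mpr (mul_le_mul_of_nonneg_left (min_le_left s 1) hbα)
  have hy1 : Real.exp y ≤ vGrowth b α 1 :=
    Real.exp_le_exp.mpr (mul_le_mul_of_nonneg_left (min_le_right s 1) hbα)
  have hexp : y + 1 ≤ Real.exp y := Real.add_one_le_exp y
  unfold vShift
  rw [div_mul_eq_mul_div, div_le_div_iff₀ (by have := vGrowth_pos b α 1; positivity)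
    (by positivity)]
  have key : y * vGrowth b α s ≤ (vGrowth b α s - 1) * Real.exp y := by
    nlinarith [mul_le_mul_of_nonneg_left hys (by linarith : 0 ≤ Real.exp y - y)]
  have := mul_le_mul_of_nonneg_left hy1 (by linarith : 0 ≤ vGrowth b α s - 1)
  nlinarith

lemma vShift_add_vGrowth_mul_le {b α s r : ℝ} (hb : 0 < b) (hα : 1 < α) (hs₀ : 0 ≤ s)
    (hs₁ : s ≤ 1) (hr : 0 ≤ r) :
    vShift b α s + vGrowth b α s * r ≤ vGrowth b α 1 * (s + r) := by
  have hE₁ := vGrowth_le_vGrowth_one hb.le hα.le hs₁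
  have hE := one_le_vGrowth hb.le hα.le hs₀
  have hsub : vGrowth b α s - 1 ≤ b * (α - 1) * s * vGrowth b α s := by
    have hinv : vGrowth b α s * Real.exp (-(b * (α - 1) * s)) = 1 := by
      rw [vGrowth, ← Real.exp_add, add_neg_cancel, Real.exp_zero]
    nlinarith [mul_le_mul_of_nonneg_left (Real.one_sub_le_exp_neg (b * (α - 1) * s))
      (vGrowth_pos b α s).le]
  have hshift : vShift b α s ≤ s * vGrowth b α s := by
    unfold vShift
    rw [div_le_iff₀ (by positivity)]
    nlinarith [mul_nonneg (mul_nonneg hb.le hs₀) (zero_le_one.trans hE)]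
  nlinarith [mul_le_mul_of_nonneg_left hE₁ hs₀, mul_le_mul_of_nonneg_right hE₁ hr]

lemma continuous_vC {b α : ℝ} {z : ℂ} (hu : (z ^ ((1 : ℂ) - α)).im ≠ 0) :
    Continuous fun s => vC b α s z := by
  simp_rw [vC_eq_cpow]
  have hbase : Continuous fun s => (vShift b α s : ℂ) + vGrowth b α s * z ^ ((1 : ℂ) - α) := by
    unfold vShift vGrowth; fun_prop
  refine continuous_iff_continuousAt.mpr fun s => hbase.continuousAt.cpow continuousAt_const ?_
  refine Complex.mem_slitPlane_iff.mpr (Or.inr ?_)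
  simpa using mul_ne_zero (vGrowth_pos b α s).ne' hu

lemma rpow_neg_mul_cos_le_re_vC {b α s φ ρ : ℝ} {z : ℂ} (hb : 0 < b) (hα : 1 ≤ α) (hs : 0 ≤ s)
    (hρ : 0 < ρ) (hρu : ρ ≤ |(z ^ ((1 : ℂ) - α)).im|) (hφ : |(z ^ ((1 : ℂ) - α)).arg| ≤ φ)
    (hφπ : (α - 1)⁻¹ * φ ≤ π) (hcos : Real.cos ((α - 1)⁻¹ * φ) ≤ 0) :
    ρ ^ (-(α - 1)⁻¹) * Real.cos ((α - 1)⁻¹ * φ) ≤ (vC b α s z).re := by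
  set u := z ^ ((1 : ℂ) - α)
  have hE := one_le_vGrowth hb.le hα hs
  rw [vC_eq_cpow]
  refine Complex.rpow_neg_mul_cos_le_re_cpow_neg (inv_nonneg.mpr (sub_nonneg.mpr hα)) hρ ?_ ?_
    hφπ hcos
  · calc ρ ≤ vGrowth b α s * |u.im| := by nlinarith [abs_nonneg u.im]
      _ = |((vShift b α s : ℂ) + vGrowth b α s * u).im| := by
        simp [abs_mul, abs_of_nonneg (zero_le_one.trans hE)]
      _ ≤ _ := Complex.abs_im_le_norm _
  · calc _ ≤ |((vGrowth b α s : ℂ) * u).arg| :=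
          Complex.abs_arg_ofReal_add_le (vShift_nonneg hb hα hs) _
      _ = |u.arg| := by rw [Complex.arg_real_mul _ (zero_lt_one.trans_le hE)]
      _ ≤ φ := hφ

lemma rpow_neg_div_two_le_re_vC {b α s : ℝ} {z : ℂ} (hα : 1 ≤ α)
    (hu : (z ^ ((1 : ℂ) - α)).im ≠ 0)
    (hgood : (1 + 3 * (α - 1)⁻¹) * (vGrowth b α s * ‖z ^ ((1 : ℂ) - α)‖) ≤ vShift b α s) :
    (vShift b α s + vGrowth b α s * ‖z ^ ((1 : ℂ) - α)‖) ^ (-(α - 1)⁻¹) / 2 ≤ (vC b α s z).re := by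
  rw [vC_eq_cpow]
  set u := z ^ ((1 : ℂ) - α)
  set B : ℂ := (vShift b α s : ℂ) + vGrowth b α s * u
  have hs := vGrowth_pos b α s
  have hβ : 0 ≤ (α - 1)⁻¹ := inv_nonneg.mpr (sub_nonneg.mpr hα)
  have hEu : 0 ≤ vGrowth b α s * ‖u‖ := by positivity
  have hBre : vShift b α s - vGrowth b α s * ‖u‖ ≤ B.re := by
    have := neg_abs_le u.re
    have := Complex.abs_re_le_norm u
    simp only [B, Complex.add_re, Complex.ofReal_re, Complex.re_ofReal_mul]
    nlinarith
  have hBim : |B.im| ≤ vGrowth b α s * ‖u‖ := by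
    simp only [B, Complex.add_im, Complex.ofReal_im, Complex.im_ofReal_mul, zero_add, abs_mul,
      abs_of_pos hs]
    exact mul_le_mul_of_nonneg_left (Complex.abs_im_le_norm u) hs.le
  refine Complex.rpow_neg_div_two_le_re_cpow_neg hβ ?_ (by nlinarith) ?_ ?_
  · intro h
    simpa [B, hs.ne', hu] using congrArg Complex.im h
  · nlinarith [Complex.re_le_norm B, mul_le_mul_of_nonneg_left hBim hβ]
  · calc ‖B‖ ≤ ‖(vShift b α s : ℂ)‖ + ‖(vGrowth b α s : ℂ) * u‖ := norm_add_le _ _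
      _ = _ := by
        rw [norm_mul, Complex.norm_real, Complex.norm_real, Real.norm_eq_abs, Real.norm_eq_abs,
          abs_of_pos hs, abs_of_nonneg (by nlinarith)]

lemma pos_of_mul_vGrowth_one_le {b α Λ : ℝ} (hα : 1 < α)
    (hΛ : α * (1 + 3 * (α - 1)⁻¹) * vGrowth b α 1 ≤ (α - 1) * Λ) : 0 < Λ := by
  have hα1 : 0 < α - 1 := sub_pos.mpr hα
  have : 0 < α * (1 + 3 * (α - 1)⁻¹) * vGrowth b α 1 := by
    have := vGrowth_pos b α 1; positivity
  exact pos_of_mul_pos_right (this.trans_le hΛ) hα1.le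

lemma mul_vGrowth_le_vShift_of_le {b α r s Λ : ℝ} (hb : 0 < b) (hα : 1 < α) (hr : 0 ≤ r)
    (hΛ : α * (1 + 3 * (α - 1)⁻¹) * vGrowth b α 1 ≤ (α - 1) * Λ) (hΛr : Λ * r ≤ 1)
    (hs : Λ * r ≤ s) :
    (1 + 3 * (α - 1)⁻¹) * (vGrowth b α s * r) ≤ vShift b α s := by
  have hα1 : 0 < α - 1 := sub_pos.mpr hα
  have hE₁ := vGrowth_pos b α 1
  have hΛ0 := pos_of_mul_vGrowth_one_le hα hΛ
  refine le_trans ?_ (mul_vGrowth_le_vShift hb hα ((mul_nonneg hΛ0.le hr).trans hs))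
  have hmin : Λ * r ≤ min s 1 := le_min hs hΛr
  rw [mul_comm (vGrowth b α s), ← mul_assoc]
  refine mul_le_mul_of_nonneg_right ?_ (vGrowth_pos b α s).le
  rw [le_div_iff₀ (by positivity)]
  nlinarith [mul_le_mul_of_nonneg_left hmin hα1.le, mul_le_mul_of_nonneg_right hΛ hr]

lemma rpow_neg_div_two_le_re_vC_of_le {b α r s Λ : ℝ} {z : ℂ} (hb : 0 < b) (hα : 1 < α)
    (hu : (z ^ ((1 : ℂ) - α)).im ≠ 0) (hr : ‖z ^ ((1 : ℂ) - α)‖ = r)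
    (hΛ : α * (1 + 3 * (α - 1)⁻¹) * vGrowth b α 1 ≤ (α - 1) * Λ) (hΛr : Λ * r ≤ 1)
    (hs : Λ * r ≤ s) :
    (vShift b α s + vGrowth b α s * r) ^ (-(α - 1)⁻¹) / 2 ≤ (vC b α s z).re := by
  subst hr
  exact rpow_neg_div_two_le_re_vC hα.le hu
    (mul_vGrowth_le_vShift_of_le hb hα (norm_nonneg _) hΛ hΛr hs)

lemma re_vC_nonneg_of_le {b α r s Λ : ℝ} {z : ℂ} (hb : 0 < b) (hα : 1 < α)
    (hu : (z ^ ((1 : ℂ) - α)).im ≠ 0) (hr : ‖z ^ ((1 : ℂ) - α)‖ = r)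
    (hΛ : α * (1 + 3 * (α - 1)⁻¹) * vGrowth b α 1 ≤ (α - 1) * Λ) (hΛr : Λ * r ≤ 1)
    (hs : Λ * r ≤ s) :
    0 ≤ (vC b α s z).re := by
  refine le_trans ?_ (rpow_neg_div_two_le_re_vC_of_le hb hα hu hr hΛ hΛr hs)
  have hr₀ : 0 ≤ r := hr ▸ norm_nonneg _
  have := vShift_nonneg hb hα.le ((mul_nonneg (pos_of_mul_vGrowth_one_le hα hΛ).le hr₀).trans hs)
  have := vGrowth_pos b α s
  positivity

lemma rpow_mul_neg_div_two_le_re_vC {b α r s Λ C : ℝ} {z : ℂ} (hb : 0 < b) (hα : 1 < α)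
    (hu : (z ^ ((1 : ℂ) - α)).im ≠ 0) (hr : ‖z ^ ((1 : ℂ) - α)‖ = r) (hr₀ : 0 < r)
    (hΛ : α * (1 + 3 * (α - 1)⁻¹) * vGrowth b α 1 ≤ (α - 1) * Λ)
    (hC : vGrowth b α 1 * (2 * Λ + 1) ≤ C) (hΛr : 2 * Λ * r ≤ 1)
    (hs : s ∈ Set.Icc (Λ * r) (2 * Λ * r)) :
    (C * r) ^ (-(α - 1)⁻¹) / 2 ≤ (vC b α s z).re := by
  have hs₀ : 0 ≤ s := (mul_nonneg (pos_of_mul_vGrowth_one_le hα hΛ).le hr₀.le).trans hs.1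
  refine le_trans ?_ (rpow_neg_div_two_le_re_vC_of_le hb hα hu hr hΛ (by linarith) hs.1)
  have hpos : 0 < vShift b α s + vGrowth b α s * r :=
    add_pos_of_nonneg_of_pos (vShift_nonneg hb hα.le hs₀) (mul_pos (vGrowth_pos b α s) hr₀)
  have hCr : vShift b α s + vGrowth b α s * r ≤ C * r := by
    nlinarith [vShift_add_vGrowth_mul_le hb hα hs₀ (by linarith [hs.2]) hr₀.le,
      mul_le_mul_of_nonneg_right hC hr₀.le, mul_le_mul_of_nonneg_left hs.2 (vGrowth_pos b α 1).le]
  have := Real.rpow_le_rpow_of_nonpos hpos hCr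
    (neg_nonpos.mpr (inv_nonneg.mpr (sub_nonneg.mpr hα.le)))
  linarith

lemma arc_cpow_one_sub {α K θ : ℝ} (hα : 1 < α) (hα2 : α < 2) (hK : 0 < K)
    (hθ : θ ∈ Set.Icc 0 π) :
    ‖((K : ℂ) * Complex.exp ((θ : ℂ) * Complex.I)) ^ ((1 : ℂ) - α)‖ = K ^ (1 - α) ∧
    (((K : ℂ) * Complex.exp ((θ : ℂ) * Complex.I)) ^ ((1 : ℂ) - α)).im =
      -(K ^ (1 - α) * Real.sin ((α - 1) * θ)) ∧
    |(((K : ℂ) * Complex.exp ((θ : ℂ) * Complex.I)) ^ ((1 : ℂ) - α)).arg| = (α - 1) * θ := by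
  have hr : 0 < K ^ (1 - α) := Real.rpow_pos_of_pos hK _
  have hψ : 0 ≤ (α - 1) * θ := mul_nonneg (sub_nonneg.mpr hα.le) hθ.1
  have hψπ : (α - 1) * θ < π := by
    nlinarith [mul_le_mul_of_nonneg_left hθ.2 (sub_nonneg.mpr hα.le), pi_pos]
  have hpolar := Complex.cpow_ofReal_mul_exp_mul_I hK ⟨by linarith [pi_pos, hθ.1], hθ.2⟩ (1 - α)
  rw [show (1 - α) * θ = -((α - 1) * θ) by ring] at hpolar
  rw [show (1 : ℂ) - α = ((1 - α : ℝ) : ℂ) by push_cast; ring, hpolar]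
  refine ⟨?_, ?_, ?_⟩
  · rw [norm_mul, Complex.norm_real, Complex.norm_exp_ofReal_mul_I, Real.norm_of_nonneg hr.le,
      mul_one]
  · rw [Complex.im_ofReal_mul, Complex.exp_ofReal_mul_I_im, Real.sin_neg, mul_neg]
  · rw [Complex.arg_real_mul _ hr, Complex.arg_exp_mul_I,
      (toIocMod_eq_self _).mpr ⟨by linarith, by linarith⟩, abs_neg, abs_of_nonneg hψ]

lemma rpow_neg_mul_cos_le_re_vC_of_mem_arc {b α s K θ m : ℝ} (hb : 0 < b) (hα : 1 < α)
    (hα2 : α < 2) (hs : 0 ≤ s) (hK : 0 < K) (hθ : θ ∈ Set.Icc (π / 2) π) (hm : 0 < m)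
    (hmsin : m ≤ Real.sin ((α - 1) * θ)) :
    m ^ (-(α - 1)⁻¹) * K * Real.cos θ ≤
      (vC b α s ((K : ℂ) * Complex.exp ((θ : ℂ) * Complex.I))).re := by
  obtain ⟨-, him, harg⟩ := arc_cpow_one_sub hα hα2 hK ⟨by linarith [pi_pos, hθ.1], hθ.2⟩
  have hr : 0 < K ^ (1 - α) := Real.rpow_pos_of_pos hK _
  have hβψ : (α - 1)⁻¹ * ((α - 1) * θ) = θ := by field_simp [(sub_pos.mpr hα).ne']
  have hsin : 0 ≤ Real.sin ((α - 1) * θ) := hm.le.trans hmsin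
  have := rpow_neg_mul_cos_le_re_vC hb hα.le hs (mul_pos hm hr)
    (by rw [him, abs_neg, abs_of_nonneg (mul_nonneg hr.le hsin)]; nlinarith) harg.le
    (by rw [hβψ]; exact hθ.2)
    (by rw [hβψ]; exact cos_nonpos_of_pi_div_two_le_of_le hθ.1 (by linarith [hθ.2, pi_pos]))
  rwa [Real.mul_rpow hm.le hr.le, rpow_one_sub_rpow_neg_inv hK hα.ne', hβψ] at this

lemma le_re_integral_vC_of_mem_arc {b α t K θ Λ C m : ℝ} (hb : 0 < b) (hα : 1 < α)
    (hα2 : α < 2) (hK : 0 < K) (hθ : θ ∈ Set.Icc (π / 2) π)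
    (hΛ : α * (1 + 3 * (α - 1)⁻¹) * vGrowth b α 1 ≤ (α - 1) * Λ)
    (hC : vGrowth b α 1 * (2 * Λ + 1) ≤ C) (hsmall : 2 * Λ * K ^ (1 - α) ≤ min t 1)
    (hm : 0 < m) (hmsin : m ≤ Real.sin ((α - 1) * θ))
    (hcos : -(m ^ (-(α - 1)⁻¹) * Real.cos θ) ≤ C ^ (-(α - 1)⁻¹) / 4) :
    Λ * C ^ (-(α - 1)⁻¹) / 4 * K ^ (2 - α) ≤
      (∫ s in (0:ℝ)..t, vC b α s ((K : ℂ) * Complex.exp ((θ : ℂ) * Complex.I))).re := by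
  obtain ⟨hnorm, him, -⟩ := arc_cpow_one_sub hα hα2 hK ⟨by linarith [pi_pos, hθ.1], hθ.2⟩
  set r := K ^ (1 - α) with hr_def
  have hr : 0 < r := Real.rpow_pos_of_pos hK _
  have hrK : r * K = K ^ (2 - α) := by
    rw [hr_def, ← Real.rpow_add_one hK.ne']; ring_nf
  have him0 : (((K : ℂ) * Complex.exp ((θ : ℂ) * Complex.I)) ^ ((1 : ℂ) - α)).im ≠ 0 := by
    rw [him]; exact neg_ne_zero.mpr (mul_pos hr (hm.trans_le hmsin)).ne'
  have hΛr : 2 * Λ * r ≤ 1 := hsmall.trans (min_le_right _ _)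
  have hΛ0 := pos_of_mul_vGrowth_one_le hα hΛ
  have hC0 : 0 < C := lt_of_lt_of_le (by have := vGrowth_pos b α 1; positivity) hC
  have hre := intervalIntegral.intervalIntegral_re
    ((continuous_vC (b := b) him0).intervalIntegrable (μ := MeasureTheory.volume) 0 t)
  simp only [RCLike.re_to_complex] at hre
  rw [← hre]
  calc Λ * C ^ (-(α - 1)⁻¹) / 4 * K ^ (2 - α)
      ≤ Λ * r * (m ^ (-(α - 1)⁻¹) * K * Real.cos θ + C ^ (-(α - 1)⁻¹) * K / 2) := by
        rw [← hrK]; nlinarith [mul_pos (mul_pos hΛ0 hr) hK]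
    _ ≤ _ := le_intervalIntegral_of_lower_bounds (Complex.continuous_re.comp (continuous_vC him0))
        (by positivity) (by linarith [hsmall, min_le_left t 1]) ?_ ?_ ?_
  · exact fun s hs => rpow_neg_mul_cos_le_re_vC_of_mem_arc hb hα hα2 hs.1 hK hθ hm hmsin
  · intro s hs
    have := rpow_mul_neg_div_two_le_re_vC hb hα him0 hnorm hr hΛ hC hΛr ⟨hs.1, by linarith [hs.2]⟩
    rwa [Real.mul_rpow hC0.le hr.le, rpow_one_sub_rpow_neg_inv hK hα.ne'] at this
  · intro s hs
    exact re_vC_nonneg_of_le hb hα him0 hnorm hΛ (by linarith [mul_pos hΛ0 hr])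
      (by linarith [mul_pos hΛ0 hr, hs.1])

theorem exists_le_re_integral_vC {b α : ℝ} (hb : 0 < b) (hα : 1 < α) (hα2 : α < 2) :
    ∃ ε₀ c₀ : ℝ, 0 < ε₀ ∧ ε₀ < π / 2 ∧ 0 < c₀ ∧ ∀ t : ℝ, 0 < t → ∀ᶠ K : ℝ in atTop,
      ∀ θ ∈ Set.Icc (π / 2) (π / 2 + ε₀), c₀ * K ^ (2 - α) ≤
        (∫ s in (0:ℝ)..t, vC b α s ((K : ℂ) * Complex.exp ((θ : ℂ) * Complex.I))).re := by
  set β := (α - 1)⁻¹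
  set Λ := α * (1 + 3 * β) * vGrowth b α 1 / (α - 1)
  set C := vGrowth b α 1 * (2 * Λ + 1)
  set m := min (Real.sin ((α - 1) * (π / 2))) (Real.sin ((α - 1) * (5 * π / 8)))
  set ε₀ := min (π / 8) (m ^ β * C ^ (-β) / 4)
  have hα1 : 0 < α - 1 := sub_pos.mpr hα
  have hπ := pi_pos
  have hΛ : 0 < Λ := by have := vGrowth_pos b α 1; positivity
  have hC : 0 < C := by have := vGrowth_pos b α 1; positivity
  have hm : 0 < m := lt_min (sin_pos_of_pos_of_lt_pi (by positivity) (by nlinarith))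
    (sin_pos_of_pos_of_lt_pi (by positivity) (by nlinarith))
  have hε₀ : 0 < ε₀ := lt_min (by positivity) (by positivity)
  have hε₀π : ε₀ ≤ π / 8 := min_le_left _ _
  refine ⟨ε₀, Λ * C ^ (-β) / 4, hε₀, by linarith, by positivity, fun t ht => ?_⟩
  have hsmall : Tendsto (fun K : ℝ => 2 * Λ * K ^ (1 - α)) atTop (nhds 0) := by
    simpa [neg_sub] using (tendsto_rpow_neg_atTop hα1).const_mul (2 * Λ)
  filter_upwards [hsmall.eventually (eventually_le_nhds (lt_min ht one_pos)),
    eventually_gt_atTop 0] with K hK hK0 θ hθ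
  refine le_re_integral_vC_of_mem_arc hb hα hα2 hK0 ⟨hθ.1, by linarith [hθ.2]⟩
    (by rw [mul_div_cancel₀ _ hα1.ne']) le_rfl hK hm ?_ ?_
  · exact strictConcaveOn_sin_Icc.concaveOn.min_le_of_mem_Icc ⟨by positivity, by nlinarith⟩
      ⟨by positivity, by nlinarith⟩ ⟨by nlinarith [hθ.1], by nlinarith [hθ.2]⟩
  · have hcos : -Real.cos θ ≤ ε₀ := by
      rw [← Real.sin_sub_pi_div_two]
      exact (Real.sin_le (by linarith [hθ.1])).trans (by linarith [hθ.2])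
    calc -(m ^ (-β) * Real.cos θ) = m ^ (-β) * -Real.cos θ := by ring
      _ ≤ m ^ (-β) * (m ^ β * C ^ (-β) / 4) := by gcongr; exact hcos.trans (min_le_right _ _)
      _ = C ^ (-β) / 4 := by rw [Real.rpow_neg hm.le]; field_simp

theorem stmt_10 (a b α : ℝ) (ha : 0 < a) (hb : 0 < b) (hα : 1 < α) (hα2 : α < 2) :
    ∃ ε₀ : ℝ, 0 < ε₀ ∧ ε₀ < π / 2 ∧
      ∀ x t : ℝ, 0 < x → 0 < t →
        Tendsto (fun K : ℝ =>
            ∫ θ in (π / 2)..(π / 2 + ε₀),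
              Complex.I * (K : ℂ) * Complex.exp ((θ : ℂ) * Complex.I) *
                Complex.exp ((x : ℂ) * ((K : ℂ) * Complex.exp ((θ : ℂ) * Complex.I))) *
                Complex.exp (-(a : ℂ) *
                  ∫ s in (0:ℝ)..t, vC b α s ((K : ℂ) * Complex.exp ((θ : ℂ) * Complex.I))))
          atTop (nhds 0) := by
  obtain ⟨ε₀, c₀, hε₀, hε₀π, hc₀, hre⟩ := exists_le_re_integral_vC hb hα hα2
  refine ⟨ε₀, hε₀, hε₀π, fun x t hx ht => ?_⟩
  have hlim := (tendsto_mul_exp_neg_mul_rpow (mul_pos ha hc₀) (sub_pos.mpr hα2)).const_mul ε₀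
  rw [mul_zero] at hlim
  refine squeeze_zero_norm' ?_ hlim
  filter_upwards [hre t ht, eventually_ge_atTop 0] with K hK hK0
  calc _ ≤ K * Real.exp (-(a * (c₀ * K ^ (2 - α)))) * |π / 2 + ε₀ - π / 2| := by
        refine intervalIntegral.norm_integral_le_of_norm_le_const fun θ hθ => ?_
        rw [Set.uIoc_of_le (by linarith)] at hθ
        refine norm_arc_integrand_le ha.le hx.le hK0 ?_ (hK θ (Set.Ioc_subset_Icc_self hθ))
        exact cos_nonpos_of_pi_div_two_le_of_le hθ.1.le (by linarith [hθ.2, pi_pos])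
    _ = ε₀ * (K * Real.exp (-(a * c₀ * K ^ (2 - α)))) := by
        rw [add_sub_cancel_left, abs_of_pos hε₀, mul_assoc a]; ring
end

section
/- Let b>0 and α∈(1,2). Then there exist ε₀ ∈ (0, π/2) and a constant κ > 0 (depending only on b, α and ε₀) such that for all θ ∈ [π/2 − ε₀, π/2 + ε₀] and all ρ ≥ 2, Re( ∫₀^1 (ρ−1) e^{iθ} · ( 1 + ((1−r)e^{iθ} + rρe^{iθ})^{α−1}/(αb) )^{−1} dr ) ≥ κ (ρ^{2−α} − 1); that is, the real part of the contour integral of z ↦ (1 + z^{α−1}/(αb))^{−1} along the straight segment from e^{iθ} to ρ e^{iθ} is at least κ(ρ^{2−α} − 1). -/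
open Real

/-!
Substituting `s = 1 + r (ρ - 1)` turns the integral into `∫₁^ρ F s ds` with
`F s = e^{iθ} / (1 + u e^{i(α-1)θ})`, `u = s^{α-1} / (α b)`, whose real part is
`(cos θ + u cos ((2-α)θ)) / |1 + u e^{i(α-1)θ}|²`. Near `θ = π/2` the term `cos θ ≥ -ε₀` is
small while `cos ((2-α)θ) ≥ δ > 0`, and `|1 + u e^{i(α-1)θ}| ≤ 1 + u ≤ (1 + α b) u` because
`u ≥ 1 / (α b)`. Hence `Re F s ≥ c s^{1-α}`, and `∫₁^ρ s^{1-α} ds = (ρ^{2-α} - 1) / (2 - α)`.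
-/
theorem Complex.ofReal_mul_exp_mul_I_cpow {s θ : ℝ} (hs : 0 < s) (hθ : θ ∈ Set.Ioc (-π) π)
    (t : ℝ) :
    ((s : ℂ) * Complex.exp (θ * Complex.I)) ^ (t : ℂ) =
      ((s ^ t : ℝ) : ℂ) * Complex.exp ((t * θ : ℝ) * Complex.I) := by
  have hpolar : (s : ℂ) * Complex.exp (θ * Complex.I) =
      Complex.exp (Real.log s + θ * Complex.I) := by
    rw [Complex.exp_add, ← Complex.ofReal_exp, Real.exp_log hs]
  rw [hpolar, Complex.cpow_def_of_ne_zero (Complex.exp_ne_zero _),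
    Complex.log_exp (by simpa using hθ.1) (by simpa using hθ.2), Real.rpow_def_of_pos hs,
    Complex.ofReal_exp, ← Complex.exp_add]
  push_cast
  ring_nf

theorem Complex.re_mul_conj_div_sq_le_re_div {z w : ℂ} {M : ℝ} (hw : w ≠ 0)
    (hzw : 0 ≤ (z * (starRingEnd ℂ) w).re) (hM : ‖w‖ ≤ M) :
    (z * (starRingEnd ℂ) w).re / M ^ 2 ≤ (z / w).re := by
  have hz : z / w = z * (starRingEnd ℂ) w * ((‖w‖ ^ 2)⁻¹ : ℝ) := by
    rw [div_eq_mul_inv, Complex.inv_def, Complex.normSq_eq_norm_sq, mul_assoc]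
  rw [hz, Complex.re_mul_ofReal, ← div_eq_mul_inv]
  gcongr

theorem one_add_mul_exp_mul_I_ne_zero {u β : ℝ} (hu : u ≠ 0) (hβ : sin β ≠ 0) :
    1 + u * Complex.exp (β * Complex.I) ≠ 0 := by
  intro h
  exact mul_ne_zero hu hβ (by simpa [Complex.exp_ofReal_mul_I_im] using congrArg Complex.im h)

theorem le_re_exp_mul_I_div_one_add {θ β u : ℝ} (hu : 0 ≤ u)
    (hw : 1 + u * Complex.exp (β * Complex.I) ≠ 0) (hnum : 0 ≤ cos θ + u * cos (θ - β)) :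
    (cos θ + u * cos (θ - β)) / (1 + u) ^ 2 ≤
      (Complex.exp (θ * Complex.I) / (1 + u * Complex.exp (β * Complex.I))).re := by
  have hre : (Complex.exp (θ * Complex.I) *
      (starRingEnd ℂ) (1 + u * Complex.exp (β * Complex.I))).re = cos θ + u * cos (θ - β) := by
    simp only [map_add, map_one, map_mul, Complex.conj_ofReal, Complex.mul_re,
      Complex.exp_ofReal_mul_I_re, Complex.add_re, Complex.one_re, Complex.ofReal_re,
      Complex.conj_re, Complex.ofReal_im, Complex.conj_im, Complex.exp_ofReal_mul_I_im, mul_neg,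
      zero_mul, neg_zero, sub_zero, Complex.add_im, Complex.one_im, Complex.mul_im, add_zero,
      zero_add, sub_neg_eq_add, cos_sub]
    ring
  have hnorm : ‖1 + u * Complex.exp (β * Complex.I)‖ ≤ 1 + u := by
    refine (norm_add_le _ _).trans ?_
    simp [Complex.norm_exp_ofReal_mul_I, abs_of_nonneg hu]
  rw [← hre]
  exact Complex.re_mul_conj_div_sq_le_re_div hw (hre ▸ hnum) hnorm

theorem neg_le_cos_of_abs_sub_pi_div_two_le {θ ε : ℝ} (h : |θ - π / 2| ≤ ε) : -ε ≤ cos θ := by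
  have hsin : |sin (π / 2 - θ)| ≤ |π / 2 - θ| := abs_sin_le_abs
  rw [sin_pi_div_two_sub, abs_sub_comm] at hsin
  linarith [neg_abs_le (cos θ)]

theorem sin_le_cos_two_sub_mul {α θ : ℝ} (hα2 : α < 2) (hθ : 0 ≤ θ)
    (hθ' : θ ≤ π / 2 + (α - 1) * (π / 4)) :
    sin ((α - 1) * (π / 4)) ≤ cos ((2 - α) * θ) := by
  have hπ := pi_pos
  rw [← cos_pi_div_two_sub]
  apply cos_le_cos_of_nonneg_of_le_pi (by positivity) (by nlinarith)
  nlinarith [mul_le_mul_of_nonneg_left hθ' (by linarith : (0:ℝ) ≤ 2 - α),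
    mul_nonneg (sq_nonneg (α - 1)) hπ.le]

theorem sin_sub_one_mul_ne_zero {α θ : ℝ} (hα : 1 < α) (hα2 : α < 2) (hθ : θ ∈ Set.Ioo 0 π) :
    sin ((α - 1) * θ) ≠ 0 :=
  (sin_pos_of_pos_of_lt_pi (by nlinarith [hθ.1]) (by nlinarith [hθ.1, hθ.2])).ne'

theorem le_re_integral_of_rpow_le {f : ℝ → ℂ} {K α ρ : ℝ} (hα2 : α < 2) (hρ : 1 ≤ ρ)
    (hf : ContinuousOn f (Set.Icc 1 ρ)) (hbound : ∀ s ∈ Set.Icc 1 ρ, K * s ^ (1 - α) ≤ (f s).re) :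
    K / (2 - α) * (ρ ^ (2 - α) - 1) ≤ (∫ s in (1:ℝ)..ρ, f s).re := by
  calc K / (2 - α) * (ρ ^ (2 - α) - 1) = ∫ s in (1:ℝ)..ρ, K * s ^ (1 - α) := by
        rw [intervalIntegral.integral_const_mul, integral_rpow (Or.inl (by linarith)),
          show 1 - α + 1 = 2 - α by ring, one_rpow]
        ring
    _ ≤ ∫ s in (1:ℝ)..ρ, (f s).re :=
        intervalIntegral.integral_mono_on hρ
          ((continuousOn_const.mul (continuousOn_id.rpow_const fun s hs =>
            Or.inl (zero_lt_one.trans_le hs.1).ne')).intervalIntegrable_of_Icc hρ)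
          ((Complex.continuous_re.comp_continuousOn hf).intervalIntegrable_of_Icc hρ) hbound
    _ = _ := intervalIntegral.intervalIntegral_re (hf.intervalIntegrable_of_Icc hρ)

noncomputable def rayIntegrand (α b θ s : ℝ) : ℂ :=
  Complex.exp (θ * Complex.I) *
    (1 + ((s : ℂ) * Complex.exp (θ * Complex.I)) ^ ((α : ℂ) - 1) / ((α : ℂ) * (b : ℂ)))⁻¹

theorem integral_segment_eq_integral_rayIntegrand (α b θ ρ : ℝ) :
    (∫ r in (0:ℝ)..1,
      ((ρ : ℂ) - 1) * Complex.exp ((θ : ℂ) * Complex.I) *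
        (1 + (((1 - r : ℝ) : ℂ) * Complex.exp ((θ : ℂ) * Complex.I) +
            (r : ℂ) * (ρ : ℂ) * Complex.exp ((θ : ℂ) * Complex.I)) ^ ((α : ℂ) - 1) /
          ((α : ℂ) * (b : ℂ)))⁻¹) =
      ∫ s in (1:ℝ)..ρ, rayIntegrand α b θ s := by
  have hpoint : ∀ r : ℝ, ((ρ : ℂ) - 1) * Complex.exp ((θ : ℂ) * Complex.I) *
        (1 + (((1 - r : ℝ) : ℂ) * Complex.exp ((θ : ℂ) * Complex.I) +
            (r : ℂ) * (ρ : ℂ) * Complex.exp ((θ : ℂ) * Complex.I)) ^ ((α : ℂ) - 1) /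
          ((α : ℂ) * (b : ℂ)))⁻¹ = (ρ - 1) • rayIntegrand α b θ ((ρ - 1) * r + 1) := by
    intro r
    simp only [rayIntegrand, Complex.real_smul]
    push_cast
    ring_nf
  simp_rw [hpoint, intervalIntegral.integral_smul, intervalIntegral.smul_integral_comp_mul_add]
  norm_num

theorem rayIntegrand_eq {α b θ s : ℝ} (hs : 0 < s) (hθ : θ ∈ Set.Ioc (-π) π) :
    rayIntegrand α b θ s = Complex.exp (θ * Complex.I) /
      (1 + ((s ^ (α - 1) / (α * b) : ℝ) : ℂ) * Complex.exp (((α - 1) * θ : ℝ) * Complex.I)) := by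
  rw [rayIntegrand, ← div_eq_mul_inv, show (α : ℂ) - 1 = ((α - 1 : ℝ) : ℂ) by push_cast; ring,
    Complex.ofReal_mul_exp_mul_I_cpow hs hθ]
  push_cast
  ring

theorem continuousOn_rayIntegrand {α b θ : ℝ} (hb : 0 < b) (hα : 1 < α) (hα2 : α < 2)
    (hθ : θ ∈ Set.Ioo 0 π) : ContinuousOn (rayIntegrand α b θ) (Set.Ioi 0) := by
  refine ContinuousOn.congr ?_ fun s hs => rayIntegrand_eq hs ⟨by linarith [hθ.1, pi_pos], hθ.2.le⟩
  refine continuousOn_const.div (ContinuousOn.add continuousOn_const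
    (ContinuousOn.mul ?_ continuousOn_const)) fun s hs => ?_
  · exact Complex.continuous_ofReal.comp_continuousOn
      ((continuousOn_id.rpow_const fun s hs => Or.inl (ne_of_gt hs)).div_const _)
  · exact one_add_mul_exp_mul_I_ne_zero (div_pos (rpow_pos_of_pos hs _) (by positivity)).ne'
      (sin_sub_one_mul_ne_zero hα hα2 hθ)

theorem le_re_rayIntegrand {α b θ δ ε s : ℝ} (hb : 0 < b) (hα : 1 < α) (hα2 : α < 2)
    (hθ : θ ∈ Set.Ioo 0 π) (hcos : -ε ≤ cos θ) (hδ : 0 ≤ δ) (hδcos : δ ≤ cos ((2 - α) * θ))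
    (hεδ : ε ≤ δ / (2 * (α * b))) (hs : 1 ≤ s) :
    δ * (α * b) / (2 * (1 + α * b) ^ 2) * s ^ (1 - α) ≤ (rayIntegrand α b θ s).re := by
  set P := α * b with hP
  have hP0 : 0 < P := by positivity
  set u := s ^ (α - 1) / P with hu
  have hPu : 1 ≤ P * u := by
    rw [hu, mul_div_cancel₀ _ hP0.ne']
    exact one_le_rpow hs (by linarith)
  have hu0 : 0 < u := by nlinarith
  have hsu : s ^ (1 - α) = (P * u)⁻¹ := by
    rw [hu, mul_div_cancel₀ _ hP0.ne', ← rpow_neg (by linarith), neg_sub]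
  have hnum : u * δ / 2 ≤ cos θ + u * cos (θ - (α - 1) * θ) := by
    have hεu : ε ≤ u * δ / 2 := by
      calc ε ≤ δ / (2 * P) := hεδ
        _ = δ / 2 * 1 / P := by ring
        _ ≤ δ / 2 * (P * u) / P := by gcongr
        _ = u * δ / 2 := by field_simp
    rw [show θ - (α - 1) * θ = (2 - α) * θ by ring]
    nlinarith
  rw [rayIntegrand_eq (by linarith) ⟨by linarith [hθ.1, pi_pos], hθ.2.le⟩, ← hP, ← hu]
  calc δ * P / (2 * (1 + P) ^ 2) * s ^ (1 - α) = u * δ / 2 / ((1 + P) * u) ^ 2 := by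
        rw [hsu]; field_simp
    _ ≤ u * δ / 2 / (1 + u) ^ 2 := by gcongr; nlinarith
    _ ≤ (cos θ + u * cos (θ - (α - 1) * θ)) / (1 + u) ^ 2 := by gcongr
    _ ≤ _ := le_re_exp_mul_I_div_one_add hu0.le
          (one_add_mul_exp_mul_I_ne_zero hu0.ne' (sin_sub_one_mul_ne_zero hα hα2 hθ)) (by nlinarith)

theorem stmt_14 (b α : ℝ) (hb : 0 < b) (hα : 1 < α) (hα2 : α < 2) :
    ∃ ε₀ : ℝ, 0 < ε₀ ∧ ε₀ < π / 2 ∧ ∃ κ : ℝ, 0 < κ ∧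
      ∀ θ ρ : ℝ, π / 2 - ε₀ ≤ θ → θ ≤ π / 2 + ε₀ → 2 ≤ ρ →
        κ * (ρ ^ (2 - α) - 1) ≤
          (∫ r in (0:ℝ)..1,
            ((ρ : ℂ) - 1) * Complex.exp ((θ : ℂ) * Complex.I) *
              (1 + (((1 - r : ℝ) : ℂ) * Complex.exp ((θ : ℂ) * Complex.I) +
                  (r : ℂ) * (ρ : ℂ) * Complex.exp ((θ : ℂ) * Complex.I)) ^ ((α : ℂ) - 1) /
                ((α : ℂ) * (b : ℂ)))⁻¹).re := by
  have hπ := pi_pos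
  set δ := sin ((α - 1) * (π / 4))
  have hδ : 0 < δ := sin_pos_of_pos_of_lt_pi (by nlinarith) (by nlinarith)
  set K := δ * (α * b) / (2 * (1 + α * b) ^ 2)
  -- `(α - 1) π / 4` keeps `cos ((2 - α) θ) ≥ δ`;
  -- `δ / (2 α b)` lets `u cos ((2 - α) θ)` absorb `cos θ`.
  set ε₀ := min ((α - 1) * (π / 4)) (δ / (2 * (α * b)))
  have hε₀ : 0 < ε₀ := lt_min (by nlinarith) (by positivity)
  have hε₀α : ε₀ ≤ (α - 1) * (π / 4) := min_le_left _ _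
  have hε₀π : ε₀ < π / 2 := by nlinarith
  refine ⟨ε₀, hε₀, hε₀π, K / (2 - α), by positivity, fun θ ρ hθ₁ hθ₂ hρ => ?_⟩
  have hθ : θ ∈ Set.Ioo 0 π := ⟨by linarith, by linarith⟩
  have hbound : ∀ s ∈ Set.Icc 1 ρ, K * s ^ (1 - α) ≤ (rayIntegrand α b θ s).re :=
    fun s hs => le_re_rayIntegrand (ε := ε₀) hb hα hα2 hθ
      (neg_le_cos_of_abs_sub_pi_div_two_le (abs_sub_le_iff.2 ⟨by linarith, by linarith⟩))
      hδ.le (sin_le_cos_two_sub_mul hα2 hθ.1.le (by linarith)) (min_le_right _ _) hs.1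
  have hcont : ContinuousOn (rayIntegrand α b θ) (Set.Icc 1 ρ) :=
    (continuousOn_rayIntegrand hb hα hα2 hθ).mono fun s hs => zero_lt_one.trans_le hs.1
  rw [integral_segment_eq_integral_rayIntegrand]
  exact le_re_integral_of_rpow_le (by linarith) (by linarith) hcont hbound
end

section
/- Let b>0, α∈(1,2) and ε₀ ∈ (0, π/2). Then there exist constants c, c′ > 0 (depending only on b, α and ε₀) such that for all ρ ≥ 2 and all θ ∈ [π/2 + ε₀, π], | ∫₀^2 ( (ρe^{iθ})^{1−α} + r )^{1/(1−α)} · ( (ρe^{iθ})^{1−α} + r + 1/(αb) )^{−1} dr | ≤ c ρ^{2−α} + c′. -/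
/-!
Put `w = (ρ e^{iθ})^(1-α)`, `β = 1/(1-α) < -1` and `k = 1/(αb)`. Then `|w| = ρ^(1-α)`, and since
`(1-α)θ` ranges over a compact subinterval of `(-π, 0)`, concavity of `sin` gives `|Im w| ≥ m |w|`
for some `m > 0`. For `r ≥ 0` the integrand is at most `(2/k) |w + r|^β + (mk/2)^(β-1)`: either
`|w| ≤ k/2`, and then `Re (w + r + k) ≥ k/2`, or both `|w + r|` and `|w + r + k|` are at least
`|Im w| ≥ mk/2`. Finally, with `d = m |w|`, `|w + r| ≥ max d |r + Re w|`, whose `β`-th power has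
integral `O(d^(β+1))` over the whole line, and `d^(β+1) = m^(β+1) ρ^(2-α)`.
-/

open Real

open Complex in
lemma Complex.arg_ofReal_mul_exp_mul_I {ρ θ : ℝ} (hρ : 0 < ρ) (hθ : θ ∈ Set.Ioc (-π) π) :
    arg (ρ * exp (θ * I)) = θ := by
  rw [arg_real_mul _ hρ, arg_exp_mul_I, toIocMod_eq_self]
  simpa [show -π + 2 * π = π by ring] using hθ

lemma mul_norm_cpow_le_abs_im {z : ℂ} {γ m : ℝ} (hm : m ≤ |sin (z.arg * γ)|) :
    m * ‖z ^ (γ : ℂ)‖ ≤ |(z ^ (γ : ℂ)).im| := by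
  rw [Complex.cpow_ofReal_im, Complex.norm_cpow_real, abs_mul,
    abs_of_nonneg (rpow_nonneg (norm_nonneg z) γ), mul_comm]
  exact mul_le_mul_of_nonneg_left hm (rpow_nonneg (norm_nonneg z) γ)

lemma continuous_max_abs_rpow {d : ℝ} (hd : 0 < d) (β : ℝ) :
    Continuous fun u : ℝ ↦ max d |u| ^ β :=
  (continuous_const.max continuous_abs).rpow_const
    fun _ ↦ Or.inl (hd.trans_le (le_max_left _ _)).ne'

lemma integral_zero_max_abs_rpow_le {d β L : ℝ} (hd : 0 < d) (hβ : β < -1) (hdL : d ≤ L) :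
    ∫ u in (0 : ℝ)..L, max d |u| ^ β ≤ β / (β + 1) * d ^ (β + 1) := by
  have hfi := (continuous_max_abs_rpow hd β).intervalIntegrable (μ := MeasureTheory.volume)
  have h_flat : ∫ u in (0 : ℝ)..d, max d |u| ^ β = d ^ (β + 1) := by
    rw [intervalIntegral.integral_congr (g := fun _ ↦ d ^ β), intervalIntegral.integral_const,
      smul_eq_mul, sub_zero, rpow_add_one hd.ne']
    · ring
    intro u hu
    rw [Set.uIcc_of_le hd.le] at hu
    simp [abs_of_nonneg hu.1, hu.2]
  have h_tail : ∫ u in d..L, max d |u| ^ β = (L ^ (β + 1) - d ^ (β + 1)) / (β + 1) := by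
    rw [intervalIntegral.integral_congr (g := fun u ↦ u ^ β)]
    · exact integral_rpow <| Or.inr ⟨by linarith, by
        rw [Set.uIcc_of_le hdL]; exact fun h ↦ absurd h.1 (not_le.2 hd)⟩
    intro u hu
    rw [Set.uIcc_of_le hdL] at hu
    simp [abs_of_nonneg (hd.le.trans hu.1), hu.1]
  have hL : L ^ (β + 1) / (β + 1) ≤ 0 :=
    div_nonpos_of_nonneg_of_nonpos (rpow_nonneg (hd.le.trans hdL) _) (by linarith)
  have h_rhs : β / (β + 1) * d ^ (β + 1) = d ^ (β + 1) - d ^ (β + 1) / (β + 1) := by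
    have : β + 1 ≠ 0 := (by linarith : β + 1 < 0).ne
    field_simp; ring
  rw [← intervalIntegral.integral_add_adjacent_intervals (hfi 0 d) (hfi d L), h_flat, h_tail,
    h_rhs, sub_div]
  linarith

lemma integral_max_abs_rpow_le {d β a b : ℝ} (hd : 0 < d) (hβ : β < -1) (hab : a ≤ b) :
    ∫ u in a..b, max d |u| ^ β ≤ 2 * (β / (β + 1)) * d ^ (β + 1) := by
  have hfi := (continuous_max_abs_rpow hd β).intervalIntegrable (μ := MeasureTheory.volume)
  set L := |a| + |b| + d
  have h_even : ∫ u in -L..0, max d |u| ^ β = ∫ u in (0 : ℝ)..L, max d |u| ^ β := by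
    simpa using (intervalIntegral.integral_comp_neg (a := 0) (b := L) fun u ↦ max d |u| ^ β).symm
  have h_half := integral_zero_max_abs_rpow_le hd hβ (show d ≤ L by
    linarith [abs_nonneg a, abs_nonneg b])
  calc ∫ u in a..b, max d |u| ^ β ≤ ∫ u in -L..L, max d |u| ^ β :=
        intervalIntegral.integral_mono_interval (by linarith [neg_abs_le a, abs_nonneg b]) hab
          (by linarith [le_abs_self b, abs_nonneg a])
          (.of_forall fun _ ↦ rpow_nonneg (hd.le.trans (le_max_left _ _)) _) (hfi _ _)
    _ = 2 * ∫ u in (0 : ℝ)..L, max d |u| ^ β := by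
        rw [← intervalIntegral.integral_add_adjacent_intervals (hfi (-L) 0) (hfi 0 L), h_even]
        ring
    _ ≤ 2 * (β / (β + 1)) * d ^ (β + 1) := by linarith

lemma continuous_norm_add_ofReal_rpow {z : ℂ} (hz : z.im ≠ 0) (β : ℝ) :
    Continuous fun r : ℝ ↦ ‖z + r‖ ^ β :=
  (continuous_const.add Complex.continuous_ofReal).norm.rpow_const fun r ↦
    Or.inl (norm_ne_zero_iff.2 fun h ↦ hz (by simpa using congrArg Complex.im h))

lemma integral_norm_add_ofReal_rpow_le {z : ℂ} {d β a b : ℝ} (hd : 0 < d) (hz : d ≤ |z.im|)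
    (hβ : β < -1) (hab : a ≤ b) :
    ∫ r in a..b, ‖z + r‖ ^ β ≤ 2 * (β / (β + 1)) * d ^ (β + 1) := by
  have h_int : IntervalIntegrable (fun r : ℝ ↦ ‖z + r‖ ^ β) MeasureTheory.volume a b :=
    (continuous_norm_add_ofReal_rpow (abs_pos.1 (hd.trans_le hz)) β).intervalIntegrable a b
  have h_int' : IntervalIntegrable (fun r : ℝ ↦ max d |r + z.re| ^ β) MeasureTheory.volume a b :=
    ((continuous_max_abs_rpow hd β).comp (continuous_add_const z.re)).intervalIntegrable a b
  have h_le : ∀ r : ℝ, max d |r + z.re| ≤ ‖z + r‖ := fun r ↦ by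
    refine max_le (hz.trans ?_) ?_
    · simpa using Complex.abs_im_le_norm (z + r)
    · simpa [add_comm] using Complex.abs_re_le_norm (z + r)
  calc ∫ r in a..b, ‖z + r‖ ^ β ≤ ∫ r in a..b, max d |r + z.re| ^ β :=
        intervalIntegral.integral_mono_on hab h_int h_int' fun r _ ↦
          rpow_le_rpow_of_nonpos (hd.trans_le (le_max_left _ _)) (h_le r) (by linarith)
    _ = ∫ u in a + z.re..b + z.re, max d |u| ^ β :=
        intervalIntegral.integral_comp_add_right (fun u ↦ max d |u| ^ β) z.re
    _ ≤ 2 * (β / (β + 1)) * d ^ (β + 1) := integral_max_abs_rpow_le hd hβ (by linarith)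

lemma norm_cpow_mul_inv_add_le_of_re {W : ℂ} {β c : ℝ} (hc : 0 < c) (hre : c / 2 ≤ (W + c).re) :
    ‖W ^ (β : ℂ) * (W + c)⁻¹‖ ≤ 2 / c * ‖W‖ ^ β := by
  have h : c / 2 ≤ ‖W + c‖ := hre.trans (Complex.re_le_norm _)
  rw [norm_mul, norm_inv, Complex.norm_cpow_real, mul_comm, ← inv_div]
  exact mul_le_mul_of_nonneg_right (inv_anti₀ (by positivity) h) (rpow_nonneg (norm_nonneg W) β)

lemma norm_cpow_mul_inv_add_le_of_im {W : ℂ} {β c d : ℝ} (hd : 0 < d) (hβ : β ≤ 0)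
    (him : d ≤ |W.im|) : ‖W ^ (β : ℂ) * (W + c)⁻¹‖ ≤ d ^ (β - 1) := by
  have hW : d ≤ ‖W‖ := him.trans (Complex.abs_im_le_norm W)
  have hWc : d ≤ ‖W + c‖ := him.trans (by simpa using Complex.abs_im_le_norm (W + c))
  rw [norm_mul, norm_inv, Complex.norm_cpow_real, rpow_sub_one hd.ne', div_eq_mul_inv]
  exact mul_le_mul (rpow_le_rpow_of_nonpos hd hW hβ) (inv_anti₀ hd hWc)
    (inv_nonneg.2 (norm_nonneg _)) (rpow_nonneg hd.le β)

lemma norm_cpow_mul_inv_add_le {w : ℂ} {β c m r : ℝ} (hc : 0 < c) (hm : 0 < m) (hβ : β ≤ 0)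
    (hw : m * ‖w‖ ≤ |w.im|) (hr : 0 ≤ r) :
    ‖(w + r) ^ (β : ℂ) * (w + r + c)⁻¹‖ ≤ 2 / c * ‖w + r‖ ^ β + (m * c / 2) ^ (β - 1) := by
  by_cases h_small : ‖w‖ ≤ c / 2
  · refine le_add_of_le_of_nonneg (norm_cpow_mul_inv_add_le_of_re hc ?_) (by positivity)
    have := neg_le_of_abs_le (Complex.abs_re_le_norm w)
    simp only [Complex.add_re, Complex.ofReal_re]
    linarith
  · have hmc : 0 < m * c / 2 := by positivity
    have hd : m * c / 2 ≤ m * ‖w‖ := by nlinarith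
    refine le_add_of_nonneg_of_le (by positivity) ?_
    calc _ ≤ (m * ‖w‖) ^ (β - 1) :=
          norm_cpow_mul_inv_add_le_of_im (hmc.trans_le hd) hβ (by simpa using hw)
      _ ≤ (m * c / 2) ^ (β - 1) := rpow_le_rpow_of_nonpos hmc hd (by linarith)

lemma norm_integral_cpow_mul_inv_add_le {w : ℂ} {β k m L : ℝ} (hk : 0 < k) (hm : 0 < m)
    (hβ : β < -1) (hL : 0 ≤ L) (hw0 : w ≠ 0) (hw : m * ‖w‖ ≤ |w.im|) :
    ‖∫ r in (0 : ℝ)..L, (w + r) ^ (β : ℂ) * (w + r + k)⁻¹‖ ≤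
      2 / k * (2 * (β / (β + 1)) * (m * ‖w‖) ^ (β + 1)) + L * (m * k / 2) ^ (β - 1) := by
  have hd : 0 < m * ‖w‖ := mul_pos hm (norm_pos_iff.2 hw0)
  have h_cont := continuous_norm_add_ofReal_rpow (abs_pos.1 (hd.trans_le hw)) β
  have h_bound : Continuous fun r : ℝ ↦ 2 / k * ‖w + r‖ ^ β + (m * k / 2) ^ (β - 1) :=
    (h_cont.const_mul _).add continuous_const
  calc _ ≤ ∫ r in (0 : ℝ)..L, (2 / k * ‖w + r‖ ^ β + (m * k / 2) ^ (β - 1)) :=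
        intervalIntegral.norm_integral_le_of_norm_le hL
          (.of_forall fun r hr ↦ norm_cpow_mul_inv_add_le hk hm (by linarith) hw hr.1.le)
          (h_bound.intervalIntegrable 0 L)
    _ = 2 / k * (∫ r in (0 : ℝ)..L, ‖w + r‖ ^ β) + L * (m * k / 2) ^ (β - 1) := by
        rw [intervalIntegral.integral_add ((h_cont.const_mul _).intervalIntegrable _ _)
          intervalIntegrable_const, intervalIntegral.integral_const_mul,
          intervalIntegral.integral_const, smul_eq_mul, sub_zero]
    _ ≤ _ := by gcongr; exact integral_norm_add_ofReal_rpow_le hd hw hβ hL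

lemma norm_ofReal_mul_exp_mul_I_cpow {ρ : ℝ} (hρ : 0 ≤ ρ) (θ α : ℝ) :
    ‖((ρ : ℂ) * Complex.exp (θ * Complex.I)) ^ ((1 : ℂ) - α)‖ = ρ ^ (1 - α) := by
  rw [← Complex.ofReal_one, ← Complex.ofReal_sub, Complex.norm_cpow_real]
  simp [Complex.norm_exp_ofReal_mul_I, abs_of_nonneg hρ]

lemma mul_norm_le_abs_im_ofReal_mul_exp_mul_I_cpow {ρ θ α a : ℝ} (hρ : 0 < ρ) (hα : 1 ≤ α)
    (hα2 : α ≤ 2) (ha : 0 ≤ a) (hθ : θ ∈ Set.Icc a π) :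
    min (sin ((α - 1) * a)) (sin ((α - 1) * π)) *
        ‖((ρ : ℂ) * Complex.exp (θ * Complex.I)) ^ ((1 : ℂ) - α)‖ ≤
      |(((ρ : ℂ) * Complex.exp (θ * Complex.I)) ^ ((1 : ℂ) - α)).im| := by
  rw [← Complex.ofReal_one, ← Complex.ofReal_sub]
  refine mul_norm_cpow_le_abs_im ?_
  rw [Complex.arg_ofReal_mul_exp_mul_I hρ ⟨by linarith [pi_pos, hθ.1], hθ.2⟩,
    show θ * (1 - α) = -((α - 1) * θ) by ring, sin_neg, abs_neg]
  refine (strictConcaveOn_sin_Icc.concaveOn.min_le_of_mem_Icc ?_ ?_ ?_).trans (le_abs_self _)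
  all_goals constructor <;> nlinarith [pi_pos, hθ.1, hθ.2]

theorem stmt_15 (b α ε₀ : ℝ) (hb : 0 < b) (hα : 1 < α) (hα2 : α < 2)
    (hε : 0 < ε₀) (hε2 : ε₀ < π / 2) :
    ∃ c c' : ℝ, 0 < c ∧ 0 < c' ∧
      ∀ ρ θ : ℝ, 2 ≤ ρ → π / 2 + ε₀ ≤ θ → θ ≤ π →
        ‖(∫ r in (0:ℝ)..2,
            (((ρ : ℂ) * Complex.exp ((θ : ℂ) * Complex.I)) ^ ((1 : ℂ) - (α : ℂ)) + (r : ℂ)) ^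
                ((1 : ℂ) / (1 - (α : ℂ))) *
              (((ρ : ℂ) * Complex.exp ((θ : ℂ) * Complex.I)) ^ ((1 : ℂ) - (α : ℂ)) + (r : ℂ) +
                1 / ((α : ℂ) * (b : ℂ)))⁻¹)‖ ≤
          c * ρ ^ (2 - α) + c' := by
  set k := 1 / (α * b) with hk_def
  set β := 1 / (1 - α) with hβ_def
  set m := min (sin ((α - 1) * (π / 2 + ε₀))) (sin ((α - 1) * π))
  have hk : 0 < k := by positivity
  have hβ : β < -1 := by rw [hβ_def, div_lt_iff_of_neg (by linarith)]; linarith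
  have hm : 0 < m := lt_min (sin_pos_of_pos_of_lt_pi (by nlinarith) (by nlinarith))
    (sin_pos_of_pos_of_lt_pi (by nlinarith [pi_pos]) (by nlinarith [pi_pos]))
  have hββ : 0 < β / (β + 1) := div_pos_of_neg_of_neg (by linarith) (by linarith)
  refine ⟨2 / k * (2 * (β / (β + 1))) * m ^ (β + 1), 2 * (m * k / 2) ^ (β - 1),
    by positivity, by positivity, fun ρ θ hρ hθ₁ hθ₂ ↦ ?_⟩
  have hρ0 : 0 < ρ := by linarith
  have hw_norm := norm_ofReal_mul_exp_mul_I_cpow hρ0.le θ α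
  have hw_im := mul_norm_le_abs_im_ofReal_mul_exp_mul_I_cpow hρ0 hα.le hα2.le
    (by linarith [pi_pos]) ⟨hθ₁, hθ₂⟩
  have hw0 : ((ρ : ℂ) * Complex.exp (θ * Complex.I)) ^ ((1 : ℂ) - α) ≠ 0 :=
    norm_ne_zero_iff.1 (hw_norm ▸ (rpow_pos_of_pos hρ0 _).ne')
  have h_exp : (1 : ℂ) / (1 - (α : ℂ)) = (β : ℂ) := by rw [hβ_def]; push_cast; rfl
  have h_k : 1 / ((α : ℂ) * (b : ℂ)) = (k : ℂ) := by rw [hk_def]; push_cast; rfl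
  have h_scale : (1 - α) * (β + 1) = 2 - α := by
    rw [hβ_def]; field_simp [(by linarith : 1 - α < 0).ne]; ring
  rw [h_exp, h_k]
  refine (norm_integral_cpow_mul_inv_add_le hk hm hβ zero_le_two hw0 hw_im).trans_eq ?_
  rw [hw_norm, mul_rpow hm.le (rpow_nonneg hρ0.le _), ← rpow_mul hρ0.le, h_scale]
  ring
end

section
/- Let α∈(1,2), a ∈ ℝ, b>0, m ∈ ℝ and ϑ>0, and set C_α := 1/(α·Γ(−α)), where Γ is the Gamma function. Let h : ℝ → ℝ be infinitely differentiable with h(x) ≥ 1 for all x and h(x) = |x| for |x| ≥ 2. For β>0 define V(y,x) := β y + h(x) for y ≥ 0 and x ∈ ℝ, and define (A V)(y,x) := (a − b y)·β + (m − ϑ x)·h′(x) + (1/2)·y·h″(x) + y ∫₀^{∞} ( V(y+z, x) − V(y,x) − z β ) C_α z^{−1−α} dz. Then there exist constants β > 0, c > 0 and M > 0 such that (A V)(y,x) ≤ −c·V(y,x) + M for all y ≥ 0 and all x ∈ ℝ. -/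
open Real MeasureTheory

set_option maxHeartbeats 1000000 in
theorem stmt_17 (α a b m ϑ : ℝ) (hα : 1 < α) (hα2 : α < 2) (hb : 0 < b) (hϑ : 0 < ϑ)
    (h : ℝ → ℝ) (hsmooth : ContDiff ℝ (⊤ : ℕ∞) h) (h1 : ∀ x : ℝ, 1 ≤ h x)
    (habs : ∀ x : ℝ, 2 ≤ |x| → h x = |x|) :
    ∃ β c M : ℝ, 0 < β ∧ 0 < c ∧ 0 < M ∧
      ∀ y x : ℝ, 0 ≤ y →
        (a - b * y) * β + (m - ϑ * x) * deriv h x + (1 / 2) * y * deriv (deriv h) x +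
            y * ∫ z in Set.Ioi (0:ℝ),
              ((β * (y + z) + h x) - (β * y + h x) - z * β) *
                ((1 / (α * Real.Gamma (-α))) * z ^ (-1 - α)) ≤
          -c * (β * y + h x) + M := by
  -- smoothness of derivatives
  have hsm : ContDiff ℝ (((⊤:ℕ∞)) : WithTop ℕ∞) h := hsmooth.of_le (by simp)
  have hd1 : ContDiff ℝ (((⊤:ℕ∞)) : WithTop ℕ∞) (deriv h) := (contDiff_infty_iff_deriv.mp hsm).2
  have hd2 : ContDiff ℝ (((⊤:ℕ∞)) : WithTop ℕ∞) (deriv (deriv h)) := (contDiff_infty_iff_deriv.mp hd1).2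
  -- derivative formulas outside [-2,2]
  have hder_pos : ∀ x : ℝ, 2 < x → deriv h x = 1 := by
    intro x hx
    have hev : h =ᶠ[nhds x] id := by
      filter_upwards [Ioi_mem_nhds hx] with t ht
      have : h t = |t| := habs t (by rw [abs_of_pos (by linarith [Set.mem_Ioi.mp ht])]; linarith [Set.mem_Ioi.mp ht])
      rw [this, abs_of_pos (by linarith [Set.mem_Ioi.mp ht])]; rfl
    rw [hev.deriv_eq, deriv_id]
  have hder_neg : ∀ x : ℝ, x < -2 → deriv h x = -1 := by
    intro x hx
    have hev : h =ᶠ[nhds x] (fun t => -t) := by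
      filter_upwards [Iio_mem_nhds hx] with t ht
      have ht' : t < -2 := Set.mem_Iio.mp ht
      have : h t = |t| := habs t (by rw [abs_of_neg (by linarith)]; linarith)
      rw [this, abs_of_neg (by linarith)]
    rw [hev.deriv_eq, (hasDerivAt_neg x).deriv]
  have hder2_pos : ∀ x : ℝ, 2 < x → deriv (deriv h) x = 0 := by
    intro x hx
    have hev : deriv h =ᶠ[nhds x] (fun _ => (1:ℝ)) := by
      filter_upwards [Ioi_mem_nhds hx] with t ht
      exact hder_pos t (Set.mem_Ioi.mp ht)
    rw [hev.deriv_eq, deriv_const]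
  have hder2_neg : ∀ x : ℝ, x < -2 → deriv (deriv h) x = 0 := by
    intro x hx
    have hev : deriv h =ᶠ[nhds x] (fun _ => (-1:ℝ)) := by
      filter_upwards [Iio_mem_nhds hx] with t ht
      exact hder_neg t (Set.mem_Iio.mp ht)
    rw [hev.deriv_eq, deriv_const]
  -- compact bounds on [-2,2]
  obtain ⟨K0, hK0⟩ := (isCompact_Icc (a := (-2:ℝ)) (b := 2)).exists_bound_of_continuousOn
    hsmooth.continuous.continuousOn
  obtain ⟨K1, hK1⟩ := (isCompact_Icc (a := (-2:ℝ)) (b := 2)).exists_bound_of_continuousOn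
    hd1.continuous.continuousOn
  obtain ⟨K2, hK2⟩ := (isCompact_Icc (a := (-2:ℝ)) (b := 2)).exists_bound_of_continuousOn
    hd2.continuous.continuousOn
  have h0mem : (0:ℝ) ∈ Set.Icc (-2:ℝ) 2 := by constructor <;> norm_num
  have hK0nn : 0 ≤ K0 := le_trans (norm_nonneg _) (hK0 0 h0mem)
  have hK1nn : 0 ≤ K1 := le_trans (norm_nonneg _) (hK1 0 h0mem)
  have hK2nn : 0 ≤ K2 := le_trans (norm_nonneg _) (hK2 0 h0mem)
  obtain ⟨c, hc⟩ : ∃ c : ℝ, c = min (b / 2) ϑ := ⟨_, rfl⟩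
  have hcpos : 0 < c := hc ▸ lt_min (by linarith) hϑ
  have hcb : c ≤ b / 2 := hc ▸ min_le_left _ _
  have hcϑ : c ≤ ϑ := hc ▸ min_le_right _ _
  obtain ⟨β, hβ⟩ : ∃ β : ℝ, β = K2 / b + 1 := ⟨_, rfl⟩
  have hβpos : 0 < β := by rw [hβ]; positivity
  obtain ⟨M, hM⟩ : ∃ M : ℝ, M = |a| * β + (|m| + 2 * ϑ) * K1 + c * K0 + |m| + 1 := ⟨_, rfl⟩
  have hMpos : 0 < M := by
    rw [hM]
    have : 0 ≤ c * K0 := mul_nonneg hcpos.le hK0nn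
    positivity
  refine ⟨β, c, M, hβpos, hcpos, hMpos, ?_⟩
  intro y x hy
  have hint : (∫ z in Set.Ioi (0:ℝ),
      ((β * (y + z) + h x) - (β * y + h x) - z * β) *
        ((1 / (α * Real.Gamma (-α))) * z ^ (-1 - α))) = 0 := by
    simp only [show ∀ z : ℝ, (β * (y + z) + h x) - (β * y + h x) - z * β = 0 from
      fun z => by ring, zero_mul, integral_zero]
  rw [hint, mul_zero, add_zero]
  by_cases hx : |x| ≤ 2
  · -- compact region
    have hxm : x ∈ Set.Icc (-2:ℝ) 2 := abs_le.mp hx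
    have hb0 : |h x| ≤ K0 := hK0 x hxm
    have hb1 : |deriv h x| ≤ K1 := hK1 x hxm
    have hb2 : |deriv (deriv h) x| ≤ K2 := hK2 x hxm
    have h1' : (m - ϑ * x) * deriv h x ≤ (|m| + 2 * ϑ) * K1 := by
      calc (m - ϑ * x) * deriv h x ≤ |(m - ϑ * x) * deriv h x| := le_abs_self _
        _ = |m - ϑ * x| * |deriv h x| := abs_mul _ _
        _ ≤ (|m| + 2 * ϑ) * K1 := by
            apply mul_le_mul _ hb1 (abs_nonneg _) (by positivity)
            calc |m - ϑ * x| ≤ |m| + |ϑ * x| := abs_sub _ _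
              _ = |m| + ϑ * |x| := by rw [abs_mul, abs_of_pos hϑ]
              _ ≤ |m| + 2 * ϑ := by nlinarith
    have h2' : deriv (deriv h) x ≤ K2 := le_trans (le_abs_self _) hb2
    have h3' : h x ≤ K0 := le_trans (le_abs_self _) hb0
    have hbβ : b * β = K2 + b := by rw [hβ]; field_simp
    have hKβ : K2 ≤ 2 * (b - c) * β := by
      nlinarith [mul_nonneg (by linarith : (0:ℝ) ≤ b - 2*c) hβpos.le]
    have hyc : (1 / 2) * y * deriv (deriv h) x + c * (β * y) ≤ b * y * β := by
      nlinarith [mul_le_mul_of_nonneg_left h2' hy, mul_le_mul_of_nonneg_left hKβ hy]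
    have hch : c * h x ≤ c * K0 := mul_le_mul_of_nonneg_left h3' hcpos.le
    have haβ : a * β ≤ |a| * β := mul_le_mul_of_nonneg_right (le_abs_self a) hβpos.le
    have hm : (0:ℝ) ≤ |m| := abs_nonneg m
    nlinarith [hyc, h1', hch, haβ, hm]
  · -- |x| > 2
    push_neg at hx
    have hhx : h x = |x| := habs x hx.le
    have haβ : a * β ≤ |a| * β := mul_le_mul_of_nonneg_right (le_abs_self a) hβpos.le
    have hcb' : c ≤ b := by linarith
    have hcby : c * (β * y) ≤ b * (β * y) :=
      mul_le_mul_of_nonneg_right hcb' (mul_nonneg hβpos.le hy)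
    have hA : (0:ℝ) ≤ (|m| + 2 * ϑ) * K1 :=
      mul_nonneg (add_nonneg (abs_nonneg m) (by linarith)) hK1nn
    have hB : (0:ℝ) ≤ c * K0 := mul_nonneg hcpos.le hK0nn
    rcases abs_cases x with ⟨hax, hx0⟩ | ⟨hax, hx0⟩
    · -- x ≥ 0, so x > 2
      have hx2 : 2 < x := by rw [hax] at hx; exact hx
      rw [hder_pos x hx2, hder2_pos x hx2, hhx, hax]
      have hcx : c * x ≤ ϑ * x := mul_le_mul_of_nonneg_right hcϑ (by linarith)
      nlinarith [le_abs_self m, hcby, haβ, hA, hB, hcx]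
    · -- x < 0, so x < -2
      have hx2 : x < -2 := by rw [hax] at hx; linarith
      rw [hder_neg x hx2, hder2_neg x hx2, hhx, hax]
      have hcx : ϑ * x ≤ c * x := mul_le_mul_of_nonpos_right hcϑ (by linarith)
      nlinarith [neg_abs_le m, hcby, haβ, hA, hB, hcx]
end
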